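/- arXiv:2211.12260 — 7 statements merged into one kernel-verified Lean document; each statement's English description precedes it below -/
import Mathlib

section
/- For every real x > 0 and every real t > 0, the half-space generating series of modified Bessel functions satisfies Σ_{n=0}^∞ t^n I_n(x) = exp(x(t + 1/t)/2) · (1 − √(x/t) · ∫_{√(xt)}^∞ exp(−(u² + x/t)/2) · I_1(√(x/t)·u) du), i.e. the sum equals exp(x(t+1/t)/2)·(1 − Q_0(√(x/t), √(xt))) where Q_0 is the zeroth-order Marcum Q-function given by the displayed integral. -/
open MeasureTheory Real

/-- Modified Bessel function of the first kind of integer order `n`. -/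
noncomputable def besselI (n : ℕ) (x : ℝ) : ℝ :=
  ∑' k : ℕ, (x / 2) ^ (n + 2 * k) / (Nat.factorial k * Nat.factorial (n + k))

open Filter Set

noncomputable def Fa : ℕ → ℝ → ℝ
  | 0 => fun u => -Real.exp (-u ^ 2 / 2)
  | (k+1) => fun u => (2 * (k+1)) * Fa k u - u ^ (2*k+2) * Real.exp (-u ^ 2 / 2)

lemma hasDerivAt_Fa (k : ℕ) (u : ℝ) :
    HasDerivAt (Fa k) (u ^ (2*k+1) * Real.exp (-u ^ 2 / 2)) u := by
  have hexp : HasDerivAt (fun u : ℝ => Real.exp (-u ^ 2 / 2))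
      (Real.exp (-u ^ 2 / 2) * (-u)) u := by
    have h : HasDerivAt (fun u : ℝ => -u ^ 2 / 2) (-u) u := by
      have := ((hasDerivAt_pow 2 u).neg).div_const 2
      exact this.congr_deriv (by push_cast; ring)
    exact h.exp
  induction k with
  | zero =>
    have := hexp.neg
    exact this.congr_deriv (by ring)
  | succ k ih =>
    have h1 := ih.const_mul (2 * ((k:ℝ)+1))
    have h2 := (hasDerivAt_pow (2*k+2) u).mul hexp
    have := h1.sub h2
    have hfa : Fa (k+1) = fun v => 2 * ((k:ℝ)+1) * Fa k v - v ^ (2*k+2) * Real.exp (-v ^ 2 / 2) := by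
      funext v
      simp only [Fa]
    rw [hfa]
    refine this.congr_deriv ?_
    push_cast [Nat.add_sub_cancel]
    ring

lemma tendsto_pow_mul_exp_sq (m : ℕ) :
    Tendsto (fun u : ℝ => u ^ m * Real.exp (-u ^ 2 / 2)) atTop (nhds 0) := by
  have h1 : Tendsto (fun u : ℝ => u ^ 2 / 2) atTop atTop := by
    apply Tendsto.atTop_div_const (by norm_num)
    exact tendsto_pow_atTop (by norm_num)
  have h2 := (tendsto_pow_mul_exp_neg_atTop_nhds_zero m).comp h1
  refine squeeze_zero' ?_ ?_ h2
  · filter_upwards [eventually_ge_atTop (0:ℝ)] with u hu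
    positivity
  · filter_upwards [eventually_ge_atTop (2:ℝ)] with u hu
    have hu0 : (0:ℝ) ≤ u := by linarith
    have : u ^ m ≤ (u ^ 2 / 2) ^ m := by
      apply pow_le_pow_left₀ hu0
      nlinarith
    simp only [Function.comp]
    have harg : -(u ^ 2 / 2) = -u ^ 2 / 2 := by ring
    rw [harg]
    exact mul_le_mul_of_nonneg_right this (Real.exp_nonneg _)

lemma tendsto_Fa (k : ℕ) : Tendsto (Fa k) atTop (nhds 0) := by
  induction k with
  | zero =>
    have := (tendsto_pow_mul_exp_sq 0).neg
    simpa [Fa] using this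
  | succ k ih =>
    have h1 := ih.const_mul (2 * ((k:ℝ)+1))
    have h2 := tendsto_pow_mul_exp_sq (2*k+2)
    have := h1.sub h2
    simp only [mul_zero, sub_zero] at this
    convert this using 2 with u
    try simp only [Fa]

lemma Fa_eval (k : ℕ) (b : ℝ) :
    Fa k b = -(2 ^ k * (Nat.factorial k) * Real.exp (-b ^ 2 / 2) *
      ∑ j ∈ Finset.range (k+1), (b ^ 2 / 2) ^ j / (Nat.factorial j)) := by
  induction k with
  | zero => simp [Fa]
  | succ k ih =>
    have hfac : ((Nat.factorial (k+1) : ℝ)) ≠ 0 := by positivity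
    simp only [Fa, ih, Finset.sum_range_succ]
    rw [Nat.factorial_succ]
    push_cast
    simp only [div_pow]
    field_simp
    ring

lemma integrableOn_pow_exp (m : ℕ) {b : ℝ} (hb : 0 < b) :
    IntegrableOn (fun u : ℝ => u ^ m * Real.exp (-u ^ 2 / 2)) (Ioi b) := by
  have h := integrableOn_rpow_mul_exp_neg_mul_sq (b := (1/2:ℝ)) (by norm_num)
    (s := (m:ℝ)) (by exact_mod_cast lt_of_lt_of_le (by norm_num : (-1:ℝ) < 0) (Nat.cast_nonneg m))
  have h2 := h.mono_set (Ioi_subset_Ioi hb.le)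
  refine h2.congr_fun ?_ measurableSet_Ioi
  intro u hu
  have hu0 : (0:ℝ) < u := lt_trans hb hu
  simp only [Real.rpow_natCast]
  congr 1
  ring

lemma integral_pow_exp (k : ℕ) {b : ℝ} (hb : 0 < b) :
    ∫ u in Ioi b, u ^ (2*k+1) * Real.exp (-u ^ 2 / 2) =
      2 ^ k * (Nat.factorial k) * Real.exp (-b ^ 2 / 2) *
        ∑ j ∈ Finset.range (k+1), (b ^ 2 / 2) ^ j / (Nat.factorial j) := by
  rw [integral_Ioi_of_hasDerivAt_of_tendsto
    (hasDerivAt_Fa k b).continuousAt.continuousWithinAt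
    (fun u _ => hasDerivAt_Fa k u) (integrableOn_pow_exp (2*k+1) hb) (tendsto_Fa k)]
  rw [Fa_eval]
  ring

lemma pow_half_helper (a : ℝ) (k : ℕ) : (a/2)^(2*k+1) * 2^k = (a/2) * (a^2/2)^k := by
  have h : (a/2)^(2*k+1) = (a/2) * ((a/2)^2)^k := by
    rw [← pow_mul]; ring
  have h2 : ((a/2)^2)^k * 2^k = (a^2/2)^k := by
    rw [← mul_pow]; congr 1; ring
  rw [h, mul_assoc, h2]

lemma marcum_integral_eq {a b : ℝ} (ha : 0 < a) (hb : 0 < b) :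
    a * ∫ u in Ioi b, Real.exp (-(u ^ 2 + a ^ 2) / 2) * besselI 1 (a * u)
      = Real.exp (-(a ^ 2 + b ^ 2) / 2) *
        ∑' k : ℕ, (a ^ 2 / 2) ^ (k+1) / (Nat.factorial (k+1)) *
          ∑ j ∈ Finset.range (k+1), (b ^ 2 / 2) ^ j / (Nat.factorial j) := by
  set term : ℕ → ℝ → ℝ := fun k u =>
    (Real.exp (-a ^ 2 / 2) * ((a/2) ^ (2*k+1) / (Nat.factorial k * Nat.factorial (k+1)))) *
      (u ^ (2*k+1) * Real.exp (-u ^ 2 / 2)) with hterm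
  have hptwise : ∀ u : ℝ, Real.exp (-(u ^ 2 + a ^ 2) / 2) * besselI 1 (a * u)
      = ∑' k : ℕ, term k u := by
    intro u
    rw [besselI, ← tsum_mul_left]
    refine tsum_congr fun k => ?_
    have hexp : Real.exp (-(u ^ 2 + a ^ 2) / 2)
        = Real.exp (-a ^ 2 / 2) * Real.exp (-u ^ 2 / 2) := by
      rw [← Real.exp_add]; congr 1; ring
    have hpow : (a*u/2)^(1+2*k) = (a/2)^(2*k+1) * u^(2*k+1) := by
      rw [← mul_pow]
      congr 1
      · ring
      · omega
    rw [hterm, hexp, hpow]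
    push_cast [Nat.add_comm 1 k]
    ring
  simp only [hptwise]
  have hint : ∀ k : ℕ, Integrable (term k) (volume.restrict (Ioi b)) := by
    intro k
    exact ((integrableOn_pow_exp (2*k+1) hb).const_mul _)
  have hintval : ∀ k : ℕ, ∫ u in Ioi b, term k u
      = (Real.exp (-a ^ 2 / 2) * ((a/2) ^ (2*k+1) / (Nat.factorial k * Nat.factorial (k+1)))) *
        (2 ^ k * (Nat.factorial k) * Real.exp (-b ^ 2 / 2) *
          ∑ j ∈ Finset.range (k+1), (b ^ 2 / 2) ^ j / (Nat.factorial j)) := by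
    intro k
    rw [hterm]
    rw [integral_const_mul, integral_pow_exp k hb]
  have hnormval : ∀ k : ℕ, (∫ u in Ioi b, ‖term k u‖) = ∫ u in Ioi b, term k u := by
    intro k
    refine setIntegral_congr_fun measurableSet_Ioi fun u hu => ?_
    have hu0 : (0:ℝ) < u := lt_trans hb hu
    refine Real.norm_of_nonneg ?_
    rw [hterm]
    positivity
  have hsum : Summable fun k => ∫ u in Ioi b, ‖term k u‖ := by
    refine Summable.of_nonneg_of_le (fun k => ?_) (fun k => ?_)
      (((Real.summable_pow_div_factorial (a^2/2)).mul_left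
        (Real.exp (-a ^ 2 / 2) * (a/2))))
    · exact integral_nonneg fun u => norm_nonneg _
    · rw [hnormval k, hintval k]
      have hfk : (0:ℝ) < Nat.factorial k := by positivity
      have hfk1 : (Nat.factorial k : ℝ) ≤ Nat.factorial (k+1) := by
        exact_mod_cast Nat.factorial_le (Nat.le_succ k)
      have hS : Real.exp (-b ^ 2 / 2) *
          (∑ j ∈ Finset.range (k+1), (b ^ 2 / 2) ^ j / (Nat.factorial j)) ≤ 1 := by
        have h1 : (∑ j ∈ Finset.range (k+1), (b ^ 2 / 2) ^ j / (Nat.factorial j))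
            ≤ Real.exp (b ^ 2 / 2) := Real.sum_le_exp_of_nonneg (by positivity) _
        calc Real.exp (-b ^ 2 / 2) * (∑ j ∈ Finset.range (k+1), (b^2/2) ^ j / (Nat.factorial j))
            ≤ Real.exp (-b ^ 2 / 2) * Real.exp (b ^ 2 / 2) :=
              mul_le_mul_of_nonneg_left h1 (Real.exp_nonneg _)
          _ = 1 := by
              rw [← Real.exp_add]
              have : -b ^ 2 / 2 + b ^ 2 / 2 = 0 := by ring
              rw [this, Real.exp_zero]
      have hcancel : (Nat.factorial k : ℝ) / (Nat.factorial k * Nat.factorial (k+1))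
          = 1 / (Nat.factorial (k+1)) := by
        rw [mul_comm]
        field_simp
        try ring
      have heq : (Real.exp (-a ^ 2 / 2) * ((a/2) ^ (2*k+1) / (Nat.factorial k * Nat.factorial (k+1)))) *
          (2 ^ k * (Nat.factorial k) * Real.exp (-b ^ 2 / 2) *
            ∑ j ∈ Finset.range (k+1), (b ^ 2 / 2) ^ j / (Nat.factorial j))
          = (Real.exp (-a ^ 2 / 2) * (a/2) * ((a^2/2)^k / (Nat.factorial (k+1)))) *
            (Real.exp (-b ^ 2 / 2) *
              ∑ j ∈ Finset.range (k+1), (b ^ 2 / 2) ^ j / (Nat.factorial j)) := by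
        calc (Real.exp (-a ^ 2 / 2) * ((a/2) ^ (2*k+1) / (Nat.factorial k * Nat.factorial (k+1)))) *
            (2 ^ k * (Nat.factorial k) * Real.exp (-b ^ 2 / 2) *
              ∑ j ∈ Finset.range (k+1), (b ^ 2 / 2) ^ j / (Nat.factorial j))
            = ((a/2) ^ (2*k+1) * 2^k) *
              ((Nat.factorial k : ℝ) / (Nat.factorial k * Nat.factorial (k+1))) *
              (Real.exp (-a ^ 2 / 2) * Real.exp (-b ^ 2 / 2) *
                ∑ j ∈ Finset.range (k+1), (b ^ 2 / 2) ^ j / (Nat.factorial j)) := by ring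
          _ = ((a/2) * (a^2/2)^k) * (1 / (Nat.factorial (k+1) : ℝ)) *
              (Real.exp (-a ^ 2 / 2) * Real.exp (-b ^ 2 / 2) *
                ∑ j ∈ Finset.range (k+1), (b ^ 2 / 2) ^ j / (Nat.factorial j)) := by
              rw [pow_half_helper a k, hcancel]
          _ = _ := by ring
      rw [heq]
      have hc : (0:ℝ) ≤ Real.exp (-a ^ 2 / 2) * (a/2) * ((a^2/2)^k / (Nat.factorial (k+1))) := by
        positivity
      calc _ ≤ (Real.exp (-a ^ 2 / 2) * (a/2) * ((a^2/2)^k / (Nat.factorial (k+1)))) * 1 :=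
            mul_le_mul_of_nonneg_left hS hc
        _ ≤ Real.exp (-a ^ 2 / 2) * (a/2) * ((a^2/2)^k / (Nat.factorial k)) := by
            rw [mul_one]
            gcongr
            all_goals first
              | positivity
              | exact_mod_cast Nat.factorial_le (Nat.le_succ k)
  rw [← MeasureTheory.integral_tsum_of_summable_integral_norm hint hsum]
  rw [← tsum_mul_left, ← tsum_mul_left]
  refine tsum_congr fun k => ?_
  rw [hintval k]
  have h2 := pow_half_helper a k
  have hexp : Real.exp (-(a ^ 2 + b ^ 2) / 2) = Real.exp (-a^2/2) * Real.exp (-b^2/2) := by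
    rw [← Real.exp_add]; congr 1; ring
  have hak : a * ((a/2) ^ (2*k+1) * 2^k) = (a^2/2)^(k+1) := by
    rw [pow_half_helper a k, pow_succ]
    ring
  have hcancel : (Nat.factorial k : ℝ) / (Nat.factorial k * Nat.factorial (k+1))
      = 1 / (Nat.factorial (k+1)) := by
    rw [mul_comm]
    field_simp
    try ring
  calc a * ((Real.exp (-a ^ 2 / 2) * ((a/2) ^ (2*k+1) / (Nat.factorial k * Nat.factorial (k+1)))) *
        (2 ^ k * (Nat.factorial k) * Real.exp (-b ^ 2 / 2) *
          ∑ j ∈ Finset.range (k+1), (b ^ 2 / 2) ^ j / (Nat.factorial j)))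
      = (a * ((a/2) ^ (2*k+1) * 2^k)) *
        ((Nat.factorial k : ℝ) / (Nat.factorial k * Nat.factorial (k+1))) *
        (Real.exp (-a ^ 2 / 2) * Real.exp (-b ^ 2 / 2) *
          ∑ j ∈ Finset.range (k+1), (b ^ 2 / 2) ^ j / (Nat.factorial j)) := by ring
    _ = (a^2/2)^(k+1) * (1 / (Nat.factorial (k+1) : ℝ)) *
        (Real.exp (-a ^ 2 / 2) * Real.exp (-b ^ 2 / 2) *
          ∑ j ∈ Finset.range (k+1), (b ^ 2 / 2) ^ j / (Nat.factorial j)) := by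
        rw [hak, hcancel]
    _ = _ := by rw [hexp]; ring

lemma pq_pow (x t : ℝ) (ht : t ≠ 0) (n k : ℕ) :
    (x*t/2)^(n+k) * (x/t/2)^k = (x/2)^(n+2*k) * t^n := by
  have h1 : (x*t/2) = (x/2)*t := by ring
  have h2 : (x/t/2) = (x/2)/t := by ring
  have h3 : n + 2*k = (n+k) + k := by omega
  rw [h1, h2, mul_pow, div_pow, h3, pow_add (x/2), pow_add t]
  simp only [div_pow, mul_pow]
  field_simp

set_option maxHeartbeats 2000000 in
/-- The half-space generating series of modified Bessel functions equals
`exp(x(t+1/t)/2) · (1 − Q₀(√(x/t), √(xt)))`, with `Q₀` given by its defining integral. -/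
theorem besselI_halfspace_genfun_eq_marcumQ_zero (x t : ℝ) (hx : 0 < x) (ht : 0 < t) :
    HasSum (fun n : ℕ => t ^ n * besselI n x)
      (Real.exp (x * (t + 1 / t) / 2) *
        (1 - Real.sqrt (x / t) *
          ∫ u in Set.Ioi (Real.sqrt (x * t)),
            Real.exp (-(u ^ 2 + x / t) / 2) * besselI 1 (Real.sqrt (x / t) * u))) := by
  have ha : 0 < Real.sqrt (x / t) := Real.sqrt_pos.mpr (div_pos hx ht)
  have hb : 0 < Real.sqrt (x * t) := Real.sqrt_pos.mpr (mul_pos hx ht)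
  have ha2 : Real.sqrt (x / t) ^ 2 = x / t := Real.sq_sqrt (div_pos hx ht).le
  have hb2 : Real.sqrt (x * t) ^ 2 = x * t := Real.sq_sqrt (mul_pos hx ht).le
  set p : ℝ := x * t / 2 with hp
  set q : ℝ := x / t / 2 with hq
  have hp0 : 0 < p := by rw [hp]; positivity
  have hq0 : 0 < q := by rw [hq]; positivity
  -- the grid function
  set f : ℕ × ℕ → ℝ := fun mk => p ^ mk.1 / (Nat.factorial mk.1) * (q ^ mk.2 / (Nat.factorial mk.2))
    with hfdef
  have hf : Summable f :=
    (Real.summable_pow_div_factorial p).mul_of_nonneg (Real.summable_pow_div_factorial q)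
      (fun m => by positivity) (fun k => by positivity)
  have hexp1 : HasSum (fun n : ℕ => p ^ n / (Nat.factorial n)) (Real.exp p) := by
    rw [Real.exp_eq_exp_ℝ]; exact NormedSpace.expSeries_div_hasSum_exp p
  have hexp2 : HasSum (fun n : ℕ => q ^ n / (Nat.factorial n)) (Real.exp q) := by
    rw [Real.exp_eq_exp_ℝ]; exact NormedSpace.expSeries_div_hasSum_exp q
  have hfsum : HasSum f (Real.exp p * Real.exp q) := hexp1.mul hexp2 hf
  have hf0 : ∀ mk, 0 ≤ f mk := fun mk => by
    simp only [hfdef]; positivity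
  set ind1 : ℕ × ℕ → ℝ := fun mk => if mk.2 ≤ mk.1 then f mk else 0 with hind1
  set ind2 : ℕ × ℕ → ℝ := fun mk => if mk.2 ≤ mk.1 then 0 else f mk with hind2
  have hs1 : Summable ind1 := by
    refine hf.of_nonneg_of_le (fun mk => ?_) (fun mk => ?_) <;> simp only [hind1] <;>
      split_ifs
    · exact hf0 mk
    · exact le_rfl
    · exact le_rfl
    · exact hf0 mk
  have hs2 : Summable ind2 := by
    refine hf.of_nonneg_of_le (fun mk => ?_) (fun mk => ?_) <;> simp only [hind2] <;>
      split_ifs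
    · exact le_rfl
    · exact hf0 mk
    · exact hf0 mk
    · exact le_rfl
  have hsplit : (∑' mk, ind1 mk) + (∑' mk, ind2 mk) = Real.exp p * Real.exp q := by
    have h := hs1.hasSum.add hs2.hasSum
    have heq : (fun mk => ind1 mk + ind2 mk) = f := by
      funext mk
      simp only [hind1, hind2]
      split_ifs <;> ring
    rw [heq] at h
    exact h.unique hfsum
  -- the injections
  have hg1inj : Function.Injective (fun nk : ℕ × ℕ => (nk.1 + nk.2, nk.2)) := by
    intro ⟨n1, k1⟩ ⟨n2, k2⟩ h
    simp only [Prod.mk.injEq] at h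
    exact Prod.ext (by omega) h.2
  have hg2inj : Function.Injective (fun kj : ℕ × ℕ => (kj.2, kj.1 + 1)) := by
    intro ⟨k1, j1⟩ ⟨k2, j2⟩ h
    simp only [Prod.mk.injEq] at h
    exact Prod.ext (by omega) h.1
  -- reindexed sums
  set fT : ℕ × ℕ → ℝ := fun nk =>
    p ^ (nk.1 + nk.2) / (Nat.factorial (nk.1 + nk.2)) * (q ^ nk.2 / (Nat.factorial nk.2))
    with hfT
  set fQ : ℕ × ℕ → ℝ := fun kj =>
    if kj.2 ≤ kj.1 then q ^ (kj.1+1) / (Nat.factorial (kj.1+1)) *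
      (p ^ kj.2 / (Nat.factorial kj.2)) else 0 with hfQ
  have hcomp1 : (fun nk : ℕ × ℕ => ind1 ((fun nk : ℕ × ℕ => (nk.1 + nk.2, nk.2)) nk)) = fT := by
    funext nk
    simp only [hind1, hfdef, hfT]
    rw [if_pos (Nat.le_add_left nk.2 nk.1)]
  have hcomp2 : (fun kj : ℕ × ℕ => ind2 ((fun kj : ℕ × ℕ => (kj.2, kj.1 + 1)) kj)) = fQ := by
    funext kj
    simp only [hind2, hfdef, hfQ]
    by_cases h : kj.2 ≤ kj.1
    · rw [if_neg (by omega), if_pos h]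
      ring
    · rw [if_pos (by omega), if_neg h]
  have hsupp1 : Function.support ind1 ⊆ Set.range (fun nk : ℕ × ℕ => (nk.1 + nk.2, nk.2)) := by
    intro mk hmk
    simp only [hind1, Function.mem_support] at hmk
    by_cases h : mk.2 ≤ mk.1
    · exact ⟨(mk.1 - mk.2, mk.2), Prod.ext (by simpa using Nat.sub_add_cancel h) rfl⟩
    · exact (hmk (if_neg h)).elim
  have hsupp2 : Function.support ind2 ⊆ Set.range (fun kj : ℕ × ℕ => (kj.2, kj.1 + 1)) := by
    intro mk hmk
    simp only [hind2, Function.mem_support] at hmk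
    by_cases h : mk.2 ≤ mk.1
    · exact (hmk (if_pos h)).elim
    · exact ⟨(mk.2 - 1, mk.1), Prod.ext rfl (by simp; omega)⟩
  have ht1 : ∑' nk : ℕ × ℕ, fT nk = ∑' mk, ind1 mk := by
    rw [← hcomp1]
    exact hg1inj.tsum_eq hsupp1
  have ht2 : ∑' kj : ℕ × ℕ, fQ kj = ∑' mk, ind2 mk := by
    rw [← hcomp2]
    exact hg2inj.tsum_eq hsupp2
  have hfTsum : Summable fT := by
    rw [← hcomp1]; exact hs1.comp_injective hg1inj
  have hfQsum : Summable fQ := by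
    rw [← hcomp2]; exact hs2.comp_injective hg2inj
  -- fQ as iterated sum
  have hQrow : ∀ k : ℕ, (∑' j : ℕ, fQ (k, j)) =
      q ^ (k+1) / (Nat.factorial (k+1)) *
        ∑ j ∈ Finset.range (k+1), p ^ j / (Nat.factorial j) := by
    intro k
    rw [tsum_eq_sum (s := Finset.range (k+1))
      (fun j hj => by
        simp only [hfQ]
        rw [if_neg (by simp only [Finset.mem_range] at hj; omega)])]
    rw [Finset.mul_sum]
    refine Finset.sum_congr rfl fun j hj => ?_
    simp only [hfQ]
    rw [if_pos (Nat.lt_succ_iff.mp (Finset.mem_range.mp hj))]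
  have hQ : ∑' kj : ℕ × ℕ, fQ kj =
      ∑' k : ℕ, q ^ (k+1) / (Nat.factorial (k+1)) *
        ∑ j ∈ Finset.range (k+1), p ^ j / (Nat.factorial j) := by
    rw [hfQsum.tsum_prod]
    exact tsum_congr hQrow
  -- the target function equals the fiberwise sums of fT
  have htarget : ∀ n : ℕ, t ^ n * besselI n x = ∑' k : ℕ, fT (n, k) := by
    intro n
    rw [besselI, ← tsum_mul_left]
    refine tsum_congr fun k => ?_
    simp only [hfT]
    rw [div_mul_div_comm, pq_pow x t ht.ne' n k]
    push_cast
    ring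
  have hhs : HasSum (fun n : ℕ => t ^ n * besselI n x) (∑' nk : ℕ × ℕ, fT nk) := by
    have h := HasSum.prod_fiberwise hfTsum.hasSum
      (fun n => (hfTsum.prod_factor n).hasSum)
    refine HasSum.congr_fun h fun n => htarget n
  -- rewrite the integral
  have hI := marcum_integral_eq ha hb
  rw [ha2, hb2] at hI
  rw [hI]
  -- final value computation
  have hE : x * (t + 1 / t) / 2 = p + q := by
    rw [hp, hq]; field_simp
  have hE2 : -(x / t + x * t) / 2 = -(p + q) := by
    rw [hp, hq]; field_simp; ring
  have hval : Real.exp (x * (t + 1 / t) / 2) *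
      (1 - Real.exp (-(x / t + x * t) / 2) *
        ∑' k : ℕ, (x / t / 2) ^ (k+1) / (Nat.factorial (k+1)) *
          ∑ j ∈ Finset.range (k+1), (x * t / 2) ^ j / (Nat.factorial j))
      = ∑' nk : ℕ × ℕ, fT nk := by
    rw [hE, hE2]
    have hQ' : (∑' k : ℕ, (x / t / 2) ^ (k+1) / (Nat.factorial (k+1)) *
        ∑ j ∈ Finset.range (k+1), (x * t / 2) ^ j / (Nat.factorial j)) = ∑' mk, ind2 mk := by
      rw [← ht2, hQ]
    rw [hQ']
    have hcancel : Real.exp (p + q) * Real.exp (-(p+q)) = 1 := by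
      rw [← Real.exp_add, add_neg_cancel, Real.exp_zero]
    have : Real.exp (p + q) = Real.exp p * Real.exp q := Real.exp_add p q
    calc Real.exp (p + q) * (1 - Real.exp (-(p+q)) * ∑' mk, ind2 mk)
        = Real.exp (p + q) - (Real.exp (p + q) * Real.exp (-(p+q))) * ∑' mk, ind2 mk := by ring
      _ = Real.exp (p + q) - ∑' mk, ind2 mk := by rw [hcancel, one_mul]
      _ = ∑' mk, ind1 mk := by rw [this, ← hsplit]; ring
      _ = ∑' nk : ℕ × ℕ, fT nk := ht1.symm
  rw [hval]
  exact hhs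
end

section
/- For every real x > 0 and every real t > 0, Σ_{n=0}^∞ t^n I_n(x) = exp(x(t + 1/t)/2) − exp(xt/2) · Σ_{k=1}^∞ (x/(2t))^k / (k!(k−1)!) · Γ(k, xt/2), where both infinite series converge. -/
open MeasureTheory Real

/-- Upper incomplete gamma function `Γ(k, y) = ∫_y^∞ u^(k-1) e^(−u) du`. -/
noncomputable def incGamma (k : ℕ) (y : ℝ) : ℝ :=
  ∫ u in Set.Ioi y, u ^ (k - 1) * Real.exp (-u)

lemma integrableOn_pow_mul_exp_neg (k : ℕ) {y : ℝ} (hy : 0 < y) :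
    IntegrableOn (fun u : ℝ => u ^ k * Real.exp (-u)) (Set.Ioi y) := by
  have h := Real.GammaIntegral_convergent (s := (k + 1 : ℝ)) (by positivity)
  have h2 : IntegrableOn (fun u : ℝ => Real.exp (-u) * u ^ ((k : ℝ) + 1 - 1)) (Set.Ioi y) :=
    h.mono_set (Set.Ioi_subset_Ioi hy.le)
  refine h2.congr_fun (fun u hu => ?_) measurableSet_Ioi
  beta_reduce
  rw [add_sub_cancel_right, Real.rpow_natCast, mul_comm]

lemma integral_pow_mul_exp_neg (k : ℕ) {y : ℝ} (hy : 0 < y) :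
    ∫ u in Set.Ioi y, u ^ k * Real.exp (-u) =
      Real.exp (-y) * ∑ m ∈ Finset.range (k + 1),
        (Nat.factorial k / Nat.factorial m : ℝ) * y ^ m := by
  induction k with
  | zero =>
    simp only [pow_zero, one_mul, zero_add, Finset.sum_range_one, Nat.factorial_zero, Nat.cast_one,
      div_one, mul_one]
    exact integral_exp_neg_Ioi y
  | succ k ih =>
    have hd : ∀ u ∈ Set.Ici y, HasDerivAt (fun u : ℝ => -(u ^ (k + 1) * Real.exp (-u)))
        (u ^ (k + 1) * Real.exp (-u) - (k + 1) * (u ^ k * Real.exp (-u))) u := by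
      intro u _
      have h1 : HasDerivAt (fun u : ℝ => u ^ (k + 1)) ((k + 1 : ℕ) * u ^ k) u :=
        hasDerivAt_pow (k + 1) u
      have h2 : HasDerivAt (fun u : ℝ => Real.exp (-u)) (-Real.exp (-u)) u := by
        have h := (Real.hasDerivAt_exp (-u)).comp u (hasDerivAt_neg u)
        simp only [mul_neg, mul_one] at h
        exact h
      refine (h1.mul h2).neg.congr_deriv ?_
      push_cast
      ring
    have hint : IntegrableOn (fun u : ℝ =>
        u ^ (k + 1) * Real.exp (-u) - (k + 1) * (u ^ k * Real.exp (-u))) (Set.Ioi y) :=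
      (integrableOn_pow_mul_exp_neg (k + 1) hy).sub
        ((integrableOn_pow_mul_exp_neg k hy).const_mul _)
    have htend : Filter.Tendsto (fun u : ℝ => -(u ^ (k + 1) * Real.exp (-u)))
        Filter.atTop (nhds 0) := by
      simpa using (tendsto_pow_mul_exp_neg_atTop_nhds_zero (k + 1)).neg
    have key := integral_Ioi_of_hasDerivAt_of_tendsto' hd hint htend
    rw [integral_sub (integrableOn_pow_mul_exp_neg (k + 1) hy)
      ((integrableOn_pow_mul_exp_neg k hy).const_mul _), integral_const_mul, ih] at key
    have hsum : ∑ m ∈ Finset.range (k + 2), ((k + 1).factorial / m.factorial : ℝ) * y ^ m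
        = (k + 1) * (∑ m ∈ Finset.range (k + 1), (k.factorial / m.factorial : ℝ) * y ^ m)
          + y ^ (k + 1) := by
      rw [Finset.sum_range_succ, Finset.mul_sum]
      congr 1
      · refine Finset.sum_congr rfl fun m _ => ?_
        rw [Nat.factorial_succ]
        push_cast
        ring
      · rw [div_self (by positivity), one_mul]
    rw [hsum]
    have := Real.exp_pos (-y)
    nlinarith [key]

lemma incGamma_succ_eq (k : ℕ) {y : ℝ} (hy : 0 < y) :
    incGamma (k + 1) y = Real.exp (-y) *
      ∑ m ∈ Finset.range (k + 1), (Nat.factorial k / Nat.factorial m : ℝ) * y ^ m := by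
  simp only [incGamma, Nat.add_sub_cancel]
  exact integral_pow_mul_exp_neg k hy


def besselDiagSet : Set (ℕ × ℕ) := {p | p.1 ≤ p.2}

def besselDiagEquiv : ℕ × ℕ ≃ ↥besselDiagSet where
  toFun p := ⟨(p.2, p.1 + p.2), Nat.le_add_left _ _⟩
  invFun q := ((q : ℕ × ℕ).2 - (q : ℕ × ℕ).1, (q : ℕ × ℕ).1)
  left_inv p := by simp
  right_inv q := by
    apply Subtype.ext
    obtain ⟨⟨k, m⟩, h⟩ := q
    simp only [besselDiagSet, Set.mem_setOf_eq] at h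
    simp only [Prod.mk.injEq]
    refine ⟨trivial, ?_⟩
    omega

def besselComplEquiv : (Σ k : ℕ, Fin (k + 1)) ≃ ↥besselDiagSetᶜ where
  toFun q := ⟨(q.1 + 1, (q.2 : ℕ)), by
    simp only [besselDiagSet, Set.mem_compl_iff, Set.mem_setOf_eq, not_le]
    exact q.2.isLt⟩
  invFun q := ⟨(q : ℕ × ℕ).1 - 1, ⟨(q : ℕ × ℕ).2, by
    have h := q.2
    simp only [besselDiagSet, Set.mem_compl_iff, Set.mem_setOf_eq, not_le] at h
    omega⟩⟩
  left_inv q := rfl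
  right_inv q := by
    apply Subtype.ext
    obtain ⟨⟨i, m⟩, h⟩ := q
    simp only [besselDiagSet, Set.mem_compl_iff, Set.mem_setOf_eq, not_le] at h
    simp only [Prod.mk.injEq]
    exact ⟨by omega, trivial⟩

set_option maxHeartbeats 1000000 in
/-- `Σ_{n≥0} tⁿ Iₙ(x) = exp(x(t+1/t)/2) − exp(xt/2) Σ_{k≥1} (x/(2t))ᵏ/(k!(k−1)!) Γ(k, xt/2)`,
with both infinite series converging. -/
theorem besselI_genfun_eq_incGamma_series (x t : ℝ) (hx : 0 < x) (ht : 0 < t) :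
    Summable (fun n : ℕ => t ^ n * besselI n x) ∧
    Summable (fun k : ℕ =>
      (x / (2 * t)) ^ (k + 1) / (Nat.factorial (k + 1) * Nat.factorial k) *
        incGamma (k + 1) (x * t / 2)) ∧
    (∑' n : ℕ, t ^ n * besselI n x) =
      Real.exp (x * (t + 1 / t) / 2) -
        Real.exp (x * t / 2) *
          ∑' k : ℕ, (x / (2 * t)) ^ (k + 1) / (Nat.factorial (k + 1) * Nat.factorial k) *
            incGamma (k + 1) (x * t / 2) := by
  have hy : 0 < x * t / 2 := by positivity
  -- abbreviations (as plain lambdas)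
  have hexp : ∀ c : ℝ, ∑' m : ℕ, c ^ m / Nat.factorial m = Real.exp c := by
    intro c
    rw [Real.exp_eq_exp_ℝ]
    exact (NormedSpace.expSeries_div_hasSum_exp c).tsum_eq
  have hsummul : ∀ A B : ℝ, 0 ≤ A → 0 ≤ B →
      Summable (fun p : ℕ × ℕ => A ^ p.1 / Nat.factorial p.1 * (B ^ p.2 / Nat.factorial p.2)) := by
    intro A B hA hB
    exact (Real.summable_pow_div_factorial A).mul_of_nonneg
      (Real.summable_pow_div_factorial B)
      (fun n => by positivity) (fun n => by positivity)
  have hg : Summable (fun p : ℕ × ℕ =>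
      (x / (2 * t)) ^ p.1 / Nat.factorial p.1 * ((x * t / 2) ^ p.2 / Nat.factorial p.2)) :=
    hsummul _ _ (by positivity) (by positivity)
  have hf : Summable (fun p : ℕ × ℕ => t ^ p.1 * ((x / 2) ^ (p.1 + 2 * p.2) /
      (Nat.factorial p.2 * Nat.factorial (p.1 + p.2)))) := by
    refine Summable.of_nonneg_of_le (fun p => by positivity) (fun p => ?_)
      (hsummul (x * t / 2) ((x / 2) ^ 2) (by positivity) (by positivity))
    obtain ⟨n, k⟩ := p
    simp only
    have h1 : (x / 2) ^ (n + 2 * k) * t ^ n = (x * t / 2) ^ n * ((x / 2) ^ 2) ^ k := by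
      rw [pow_add, pow_mul]
      have : (x * t / 2) ^ n = (x / 2) ^ n * t ^ n := by rw [← mul_pow]; ring_nf
      rw [this]; ring
    calc t ^ n * ((x / 2) ^ (n + 2 * k) /
          ((Nat.factorial k : ℝ) * Nat.factorial (n + k)))
        = ((x * t / 2) ^ n * ((x / 2) ^ 2) ^ k) /
          ((Nat.factorial k : ℝ) * Nat.factorial (n + k)) := by rw [← h1]; ring
      _ ≤ ((x * t / 2) ^ n * ((x / 2) ^ 2) ^ k) /
          ((Nat.factorial k : ℝ) * Nat.factorial n) := by
          gcongr
          exact Nat.le_add_right n k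
      _ = (x * t / 2) ^ n / Nat.factorial n * (((x / 2) ^ 2) ^ k / Nat.factorial k) := by ring
  -- claim 1 : the Bessel series is summable
  have claim1 : Summable (fun n : ℕ => t ^ n * besselI n x) :=
    hf.prod.congr fun n => by rw [besselI, ← tsum_mul_left]
  -- Step 1 : Bessel series as a double sum
  have h1 : (∑' n : ℕ, t ^ n * besselI n x) = ∑' p : ℕ × ℕ,
      t ^ p.1 * ((x / 2) ^ (p.1 + 2 * p.2) /
        (Nat.factorial p.2 * Nat.factorial (p.1 + p.2))) := by
    rw [hf.tsum_prod]
    refine tsum_congr fun n => ?_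
    rw [besselI, ← tsum_mul_left]
  -- Step 2 : double exponential sum
  have h2 : (∑' p : ℕ × ℕ,
      (x / (2 * t)) ^ p.1 / Nat.factorial p.1 * ((x * t / 2) ^ p.2 / Nat.factorial p.2))
      = Real.exp (x * (t + 1 / t) / 2) := by
    rw [hg.tsum_prod]
    have : ∀ k : ℕ, (∑' m : ℕ, (x / (2 * t)) ^ k / Nat.factorial k *
        ((x * t / 2) ^ m / Nat.factorial m))
        = (x / (2 * t)) ^ k / Nat.factorial k * Real.exp (x * t / 2) := by
      intro k
      rw [tsum_mul_left, hexp]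
    rw [tsum_congr this, tsum_mul_right, hexp, ← Real.exp_add]
    congr 1
    field_simp
    ring
  have h3 : (∑' q : ↥besselDiagSet, (x / (2 * t)) ^ (q : ℕ × ℕ).1 / Nat.factorial (q : ℕ × ℕ).1 *
        ((x * t / 2) ^ (q : ℕ × ℕ).2 / Nat.factorial (q : ℕ × ℕ).2))
      = ∑' p : ℕ × ℕ, t ^ p.1 * ((x / 2) ^ (p.1 + 2 * p.2) /
        (Nat.factorial p.2 * Nat.factorial (p.1 + p.2))) := by
    rw [← besselDiagEquiv.tsum_eq]
    refine tsum_congr fun p => ?_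
    obtain ⟨n, k⟩ := p
    show (x / (2 * t)) ^ k / Nat.factorial k * ((x * t / 2) ^ (n + k) / Nat.factorial (n + k))
      = t ^ n * ((x / 2) ^ (n + 2 * k) / (Nat.factorial k * Nat.factorial (n + k)))
    have e1 : (x / (2 * t)) ^ k = (x / 2) ^ k / t ^ k := by
      rw [← div_pow, div_div]
    have e2 : (x * t / 2) ^ (n + k) = (x / 2) ^ (n + k) * t ^ (n + k) := by
      rw [← mul_pow]; ring_nf
    have e3 : (x / 2) ^ (n + 2 * k) = (x / 2) ^ k * (x / 2) ^ (n + k) := by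
      rw [← pow_add]; congr 1; omega
    have e4 : t ^ (n + k) = t ^ n * t ^ k := pow_add t n k
    have htk : (t : ℝ) ^ k ≠ 0 := pow_ne_zero _ ht.ne'
    have hk1 : (Nat.factorial k : ℝ) ≠ 0 := by positivity
    have hk2 : (Nat.factorial (n + k) : ℝ) ≠ 0 := by positivity
    rw [e1, e2, e3, e4]
    field_simp
  -- Step 4 : sum over complement of S
  have hsig : Summable (fun q : Σ k : ℕ, Fin (k + 1) =>
      (x / (2 * t)) ^ (q.1 + 1) / Nat.factorial (q.1 + 1) *
        ((x * t / 2) ^ (q.2 : ℕ) / Nat.factorial (q.2 : ℕ))) := by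
    have := besselComplEquiv.summable_iff.mpr (hg.subtype besselDiagSetᶜ)
    exact this
  have hfin : ∀ k : ℕ, (∑' m : Fin (k + 1),
      (x / (2 * t)) ^ (k + 1) / Nat.factorial (k + 1) *
        ((x * t / 2) ^ (m : ℕ) / Nat.factorial (m : ℕ)))
      = ∑ m ∈ Finset.range (k + 1),
        (x / (2 * t)) ^ (k + 1) / Nat.factorial (k + 1) *
          ((x * t / 2) ^ m / Nat.factorial m) := by
    intro k
    exact (tsum_fintype _).trans (Fin.sum_univ_eq_sum_range
      (fun m : ℕ => (x / (2 * t)) ^ (k + 1) / Nat.factorial (k + 1) *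
        ((x * t / 2) ^ m / Nat.factorial m)) (k + 1))
  have h4 : (∑' q : ↥besselDiagSetᶜ, (x / (2 * t)) ^ (q : ℕ × ℕ).1 / Nat.factorial (q : ℕ × ℕ).1 *
        ((x * t / 2) ^ (q : ℕ × ℕ).2 / Nat.factorial (q : ℕ × ℕ).2))
      = ∑' k : ℕ, ∑ m ∈ Finset.range (k + 1),
          (x / (2 * t)) ^ (k + 1) / Nat.factorial (k + 1) *
            ((x * t / 2) ^ m / Nat.factorial m) := by
    have e1 : (∑' q : ↥besselDiagSetᶜ,
        (x / (2 * t)) ^ (q : ℕ × ℕ).1 / Nat.factorial (q : ℕ × ℕ).1 *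
          ((x * t / 2) ^ (q : ℕ × ℕ).2 / Nat.factorial (q : ℕ × ℕ).2))
        = ∑' c : Σ k : ℕ, Fin (k + 1),
            (x / (2 * t)) ^ (c.1 + 1) / Nat.factorial (c.1 + 1) *
              ((x * t / 2) ^ (c.2 : ℕ) / Nat.factorial (c.2 : ℕ)) := by
      rw [← besselComplEquiv.tsum_eq]
      exact tsum_congr fun c => rfl
    rw [e1, hsig.tsum_sigma]
    exact tsum_congr hfin
  -- Step 5 : per-k identification with incomplete Gamma terms
  have hT : ∀ k : ℕ, Real.exp (x * t / 2) *
      ((x / (2 * t)) ^ (k + 1) / (Nat.factorial (k + 1) * Nat.factorial k) *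
        incGamma (k + 1) (x * t / 2))
      = ∑ m ∈ Finset.range (k + 1),
          (x / (2 * t)) ^ (k + 1) / Nat.factorial (k + 1) *
            ((x * t / 2) ^ m / Nat.factorial m) := by
    intro k
    rw [incGamma_succ_eq k hy]
    have hE : Real.exp (x * t / 2) * Real.exp (-(x * t / 2)) = 1 := by
      rw [← Real.exp_add, add_neg_cancel, Real.exp_zero]
    calc Real.exp (x * t / 2) *
        ((x / (2 * t)) ^ (k + 1) / (Nat.factorial (k + 1) * Nat.factorial k) *
          (Real.exp (-(x * t / 2)) *
            ∑ m ∈ Finset.range (k + 1), (Nat.factorial k / Nat.factorial m : ℝ) * (x * t / 2) ^ m))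
        = (Real.exp (x * t / 2) * Real.exp (-(x * t / 2))) *
          ((x / (2 * t)) ^ (k + 1) / (Nat.factorial (k + 1) * Nat.factorial k) *
            ∑ m ∈ Finset.range (k + 1), (Nat.factorial k / Nat.factorial m : ℝ) * (x * t / 2) ^ m) := by
          ring
      _ = (x / (2 * t)) ^ (k + 1) / (Nat.factorial (k + 1) * Nat.factorial k) *
            ∑ m ∈ Finset.range (k + 1), (Nat.factorial k / Nat.factorial m : ℝ) * (x * t / 2) ^ m := by
          rw [hE, one_mul]
      _ = ∑ m ∈ Finset.range (k + 1),
            (x / (2 * t)) ^ (k + 1) / Nat.factorial (k + 1) *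
              ((x * t / 2) ^ m / Nat.factorial m) := by
          rw [Finset.mul_sum]
          refine Finset.sum_congr rfl fun m _ => ?_
          have hk : (Nat.factorial k : ℝ) ≠ 0 := by positivity
          have hk1 : (Nat.factorial (k + 1) : ℝ) ≠ 0 := by positivity
          have hm : (Nat.factorial m : ℝ) ≠ 0 := by positivity
          field_simp
  -- claim 2 : summability of the incomplete-Gamma series
  have hsig2 : Summable (fun k : ℕ => Real.exp (x * t / 2) *
      ((x / (2 * t)) ^ (k + 1) / (Nat.factorial (k + 1) * Nat.factorial k) *
        incGamma (k + 1) (x * t / 2))) :=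
    hsig.sigma.congr fun k => by rw [hfin k, ← hT k]
  have claim2 : Summable (fun k : ℕ =>
      (x / (2 * t)) ^ (k + 1) / (Nat.factorial (k + 1) * Nat.factorial k) *
        incGamma (k + 1) (x * t / 2)) := by
    have hE : Real.exp (x * t / 2) ≠ 0 := (Real.exp_pos _).ne'
    refine (hsig2.mul_left (Real.exp (x * t / 2))⁻¹).congr fun k => ?_
    field_simp
  -- Step 6 : sum over complement equals exp * Gamma series
  have h5 : (∑' q : ↥besselDiagSetᶜ, (x / (2 * t)) ^ (q : ℕ × ℕ).1 / Nat.factorial (q : ℕ × ℕ).1 *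
        ((x * t / 2) ^ (q : ℕ × ℕ).2 / Nat.factorial (q : ℕ × ℕ).2))
      = Real.exp (x * t / 2) *
          ∑' k : ℕ, (x / (2 * t)) ^ (k + 1) / (Nat.factorial (k + 1) * Nat.factorial k) *
            incGamma (k + 1) (x * t / 2) := by
    rw [h4, ← tsum_mul_left]
    exact tsum_congr fun k => (hT k).symm
  -- assemble
  refine ⟨claim1, claim2, ?_⟩
  have hsplit := hg.tsum_subtype_add_tsum_subtype_compl besselDiagSet
  rw [h3, h5, h2] at hsplit
  rw [h1]
  linarith [hsplit]
end

section
/- Fix a real t ≠ 0 and let S(x) = Σ_{n=0}^∞ t^n I_n(x) (this series converges for every real x). Then S is differentiable in x and satisfies the first-order linear differential equation S'(x) = (1/2)(t + 1/t) · S(x) − I_0(x)/(2t) + I_1(x)/2 for all real x. -/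
open MeasureTheory Real

namespace BesselGenAux

/-- The double-indexed summand `tⁿ (x/2)^{n+2k} / (k!(n+k)!)`. -/
noncomputable def Fb (t : ℝ) (p : ℕ × ℕ) (x : ℝ) : ℝ :=
  t ^ p.1 * ((x / 2) ^ (p.1 + 2 * p.2) / (Nat.factorial p.2 * Nat.factorial (p.1 + p.2)))

/-- The `x`-derivative of `Fb`. -/
noncomputable def Fb' (t : ℝ) (p : ℕ × ℕ) (x : ℝ) : ℝ :=
  t ^ p.1 * (((p.1 + 2 * p.2 : ℕ) : ℝ) * (x / 2) ^ (p.1 + 2 * p.2 - 1) / 2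
      / (Nat.factorial p.2 * Nat.factorial (p.1 + p.2)))

lemma hasDerivAt_Fb (t x : ℝ) (p : ℕ × ℕ) : HasDerivAt (fun y => Fb t p y) (Fb' t p x) x := by
  have h : HasDerivAt (fun y : ℝ => (y / 2) ^ (p.1 + 2 * p.2))
      (((p.1 + 2 * p.2 : ℕ) : ℝ) * (x / 2) ^ (p.1 + 2 * p.2 - 1) * (1 / 2)) x := by
    simpa using ((hasDerivAt_id x).div_const 2).fun_pow (p.1 + 2 * p.2)
  have h2 := (h.div_const ((Nat.factorial p.2 * Nat.factorial (p.1 + p.2) : ℕ) : ℝ)).const_mul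
    (t ^ p.1)
  convert (id h2 : HasDerivAt (fun y : ℝ => t ^ p.1 * ((y / 2) ^ (p.1 + 2 * p.2)
    / ((Nat.factorial p.2 * Nat.factorial (p.1 + p.2) : ℕ) : ℝ))) _ x) using 1
  · ext y; unfold Fb; push_cast; ring
  · unfold Fb'; push_cast; ring

lemma fact_ineq (n k : ℕ) :
    (n.factorial * k.factorial : ℝ) ≤ (k.factorial : ℝ) * ((n + k).factorial : ℝ) := by
  have h1 : n.factorial * k.factorial ≤ (n + k).factorial :=
    Nat.le_of_dvd (n + k).factorial_pos (Nat.factorial_mul_factorial_dvd_factorial_add n k)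
  have h2 : (n + k).factorial ≤ k.factorial * (n + k).factorial :=
    Nat.le_mul_of_pos_left _ k.factorial_pos
  exact_mod_cast h1.trans h2

lemma bound_gen (t : ℝ) (n k : ℕ) (c : ℝ) (hc1 : 0 ≤ c) (hc2 : c ≤ ((n + 2 * k : ℕ) : ℝ))
    {y r : ℝ} (hy : |y| / 2 ≤ r) (hr : 1 ≤ r) :
    |t ^ n * (c * (y / 2) ^ (n + 2 * k - 1) / 2
        / ((Nat.factorial k : ℝ) * (Nat.factorial (n + k) : ℝ)))|
      ≤ (2 * |t| * r) ^ n / n.factorial * ((4 * r ^ 2) ^ k / k.factorial) := by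
  have hr0 : (0 : ℝ) ≤ r := le_trans zero_le_one hr
  have habs : |t ^ n * (c * (y / 2) ^ (n + 2 * k - 1) / 2
        / ((Nat.factorial k : ℝ) * (Nat.factorial (n + k) : ℝ)))|
      = |t| ^ n * (c * (|y| / 2) ^ (n + 2 * k - 1) / 2
        / ((Nat.factorial k : ℝ) * (Nat.factorial (n + k) : ℝ))) := by
    rw [abs_mul, abs_div, abs_div, abs_mul, abs_pow, abs_pow, abs_div, abs_mul,
      abs_of_nonneg hc1, Nat.abs_cast, Nat.abs_cast, abs_two]
  rw [habs]
  have key : |t| ^ n * (c * (|y| / 2) ^ (n + 2 * k - 1) / 2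
        / ((Nat.factorial k : ℝ) * (Nat.factorial (n + k) : ℝ)))
      ≤ |t| ^ n * ((2 : ℝ) ^ (n + 2 * k) * r ^ (n + 2 * k)
        / ((n.factorial * k.factorial : ℝ))) := by
    have e1 : c * (|y| / 2) ^ (n + 2 * k - 1) / 2 ≤ (2 : ℝ) ^ (n + 2 * k) * r ^ (n + 2 * k) := by
      have p1 : (|y| / 2) ^ (n + 2 * k - 1) ≤ r ^ (n + 2 * k) := by
        calc (|y| / 2) ^ (n + 2 * k - 1) ≤ r ^ (n + 2 * k - 1) :=
              pow_le_pow_left₀ (by positivity) hy _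
          _ ≤ r ^ (n + 2 * k) := pow_le_pow_right₀ hr (Nat.sub_le _ _)
      have p2 : c ≤ (2 : ℝ) ^ (n + 2 * k) := by
        refine hc2.trans ?_
        exact_mod_cast (Nat.lt_two_pow_self (n := n + 2 * k)).le
      calc c * (|y| / 2) ^ (n + 2 * k - 1) / 2 ≤ c * (|y| / 2) ^ (n + 2 * k - 1) :=
            div_le_self (by positivity) one_le_two
        _ ≤ (2 : ℝ) ^ (n + 2 * k) * r ^ (n + 2 * k) :=
            mul_le_mul p2 p1 (by positivity) (by positivity)
    refine mul_le_mul_of_nonneg_left ?_ (by positivity)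
    calc c * (|y| / 2) ^ (n + 2 * k - 1) / 2
          / ((Nat.factorial k : ℝ) * (Nat.factorial (n + k) : ℝ))
        ≤ (2 : ℝ) ^ (n + 2 * k) * r ^ (n + 2 * k)
          / ((Nat.factorial k : ℝ) * (Nat.factorial (n + k) : ℝ)) := by
          refine div_le_div_of_nonneg_right ?_ (by positivity) |>.trans_eq rfl
          exact e1
      _ ≤ (2 : ℝ) ^ (n + 2 * k) * r ^ (n + 2 * k) / ((n.factorial * k.factorial : ℝ)) := by
          refine div_le_div_of_nonneg_left (by positivity) (by positivity) (fact_ineq n k)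
  refine key.trans (le_of_eq ?_)
  have h4 : ((4 : ℝ) * r ^ 2) ^ k = 2 ^ (2 * k) * r ^ (2 * k) := by
    rw [mul_pow, pow_mul, pow_mul]; norm_num
  rw [h4, mul_pow]
  rw [pow_add, pow_add]
  ring

lemma Fb_bound (t x : ℝ) (p : ℕ × ℕ) :
    |Fb t p x| ≤ (|t| * (|x| / 2)) ^ p.1 / p.1.factorial
      * (((|x| / 2) ^ 2) ^ p.2 / p.2.factorial) := by
  obtain ⟨n, k⟩ := p
  have habs : |Fb t (n, k) x|
      = |t| ^ n * ((|x| / 2) ^ (n + 2 * k)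
        / ((Nat.factorial k : ℝ) * (Nat.factorial (n + k) : ℝ))) := by
    unfold Fb
    rw [abs_mul, abs_div, abs_mul, abs_pow, abs_pow, abs_div,
      Nat.abs_cast, Nat.abs_cast, abs_two]
  rw [habs]
  have key : |t| ^ n * ((|x| / 2) ^ (n + 2 * k)
        / ((Nat.factorial k : ℝ) * (Nat.factorial (n + k) : ℝ)))
      ≤ |t| ^ n * ((|x| / 2) ^ (n + 2 * k) / ((n.factorial : ℝ) * (k.factorial : ℝ))) := by
    refine mul_le_mul_of_nonneg_left ?_ (by positivity)
    exact div_le_div_of_nonneg_left (by positivity) (by positivity) (fact_ineq n k)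
  refine key.trans (le_of_eq ?_)
  rw [mul_pow, pow_add, pow_mul]
  ring

lemma summable_major {a b : ℝ} (ha : 0 ≤ a) (hb : 0 ≤ b) :
    Summable fun p : ℕ × ℕ => a ^ p.1 / p.1.factorial * (b ^ p.2 / p.2.factorial) := by
  apply Summable.mul_of_nonneg (Real.summable_pow_div_factorial a)
    (Real.summable_pow_div_factorial b)
  · intro n
    positivity
  · intro k
    positivity

end BesselGenAux

open BesselGenAux

/-- For fixed `t ≠ 0`, the function `S(x) = Σ_{n≥0} tⁿ Iₙ(x)` converges for every real `x`,
is differentiable, and satisfies `S'(x) = (1/2)(t + 1/t) S(x) − I₀(x)/(2t) + I₁(x)/2`. -/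
theorem besselI_genfun_hasDerivAt (t : ℝ) (ht : t ≠ 0) :
    (∀ x : ℝ, Summable (fun n : ℕ => t ^ n * besselI n x)) ∧
    (∀ x : ℝ, HasDerivAt (fun y : ℝ => ∑' n : ℕ, t ^ n * besselI n y)
      ((1 / 2) * (t + 1 / t) * (∑' n : ℕ, t ^ n * besselI n x)
        - besselI 0 x / (2 * t) + besselI 1 x / 2) x) := by
  have hFsum : ∀ x : ℝ, Summable fun p : ℕ × ℕ => Fb t p x := by
    intro x
    refine Summable.of_norm_bounded
      (summable_major (a := |t| * (|x| / 2)) (b := (|x| / 2) ^ 2)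
        (by positivity) (by positivity)) (fun p => ?_)
    simpa [Real.norm_eq_abs] using Fb_bound t x p
  have hFk : ∀ (x : ℝ) (n : ℕ), Summable fun k => Fb t (n, k) x :=
    fun x n => (hFsum x).prod_factor n
  have hFbI : ∀ (x : ℝ) (n : ℕ), (∑' k, Fb t (n, k) x) = t ^ n * besselI n x := by
    intro x n
    rw [besselI, ← tsum_mul_left]
    exact tsum_congr fun k => rfl
  have hS : ∀ x : ℝ, HasSum (fun n : ℕ => t ^ n * besselI n x) (∑' p : ℕ × ℕ, Fb t p x) :=
    fun x => (hFsum x).hasSum.prod_fiberwise (fun n => (hFbI x n) ▸ (hFk x n).hasSum)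
  refine ⟨fun x => (hS x).summable, fun x => ?_⟩
  set r : ℝ := |x| + 1 with hr_def
  have hr1 : (1 : ℝ) ≤ r := by rw [hr_def]; linarith [abs_nonneg x]
  have hr0 : (0 : ℝ) ≤ r := le_trans zero_le_one hr1
  have hu : Summable fun p : ℕ × ℕ =>
      (2 * |t| * r) ^ p.1 / p.1.factorial * ((4 * r ^ 2) ^ p.2 / p.2.factorial) :=
    summable_major (by positivity) (by positivity)
  have hball : ∀ y ∈ Metric.ball (0 : ℝ) (2 * r), |y| / 2 ≤ r := by
    intro y hy
    rw [Metric.mem_ball, Real.dist_eq, sub_zero] at hy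
    linarith
  have hxball : x ∈ Metric.ball (0 : ℝ) (2 * r) := by
    rw [Metric.mem_ball, Real.dist_eq, sub_zero, hr_def]
    linarith [abs_nonneg x, le_abs_self x]
  have hderiv : HasDerivAt (fun z : ℝ => ∑' p : ℕ × ℕ, Fb t p z)
      (∑' p : ℕ × ℕ, Fb' t p x) x := by
    refine hasDerivAt_tsum_of_isPreconnected hu Metric.isOpen_ball
      ((convex_ball (0 : ℝ) (2 * r)).isPreconnected)
      (fun p y _ => hasDerivAt_Fb t y p) (fun p y hy => ?_) hxball (hFsum x) hxball
    rw [Real.norm_eq_abs]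
    unfold Fb'
    exact bound_gen t p.1 p.2 _ (by positivity) le_rfl (hball y hy) hr1
  have hfun : (fun y : ℝ => ∑' n : ℕ, t ^ n * besselI n y)
      = fun y : ℝ => ∑' p : ℕ × ℕ, Fb t p y := funext fun y => (hS y).tsum_eq
  rw [hfun]
  convert hderiv using 1
  set A : ℕ × ℕ → ℝ := fun p =>
    t ^ p.1 * (((p.1 + p.2 : ℕ) : ℝ) * (x / 2) ^ (p.1 + 2 * p.2 - 1) / 2
      / (Nat.factorial p.2 * Nat.factorial (p.1 + p.2))) with hA_def
  set B : ℕ × ℕ → ℝ := fun p =>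
    t ^ p.1 * ((p.2 : ℝ) * (x / 2) ^ (p.1 + 2 * p.2 - 1) / 2
      / (Nat.factorial p.2 * Nat.factorial (p.1 + p.2))) with hB_def
  have hAsum : Summable A := by
    refine Summable.of_norm_bounded hu (fun p => ?_)
    rw [Real.norm_eq_abs, hA_def]
    refine bound_gen t p.1 p.2 _ (by positivity) ?_ (hball x hxball) hr1
    exact_mod_cast (by omega : p.1 + p.2 ≤ p.1 + 2 * p.2)
  have hBsum : Summable B := by
    refine Summable.of_norm_bounded hu (fun p => ?_)
    rw [Real.norm_eq_abs, hB_def]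
    refine bound_gen t p.1 p.2 _ (by positivity) ?_ (hball x hxball) hr1
    exact_mod_cast (by omega : p.2 ≤ p.1 + 2 * p.2)
  have hAB : ∀ p : ℕ × ℕ, Fb' t p x = A p + B p := by
    intro p
    rw [hA_def, hB_def]
    unfold Fb'
    push_cast
    ring
  have hAk : ∀ n, Summable fun k => A (n, k) := fun n => hAsum.prod_factor n
  have hBk : ∀ n, Summable fun k => B (n, k) := fun n => hBsum.prod_factor n
  have hA0 : (∑' k : ℕ, A (0, k)) = besselI 1 x / 2 := by
    rw [Summable.tsum_eq_zero_add (hAk 0)]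
    have h0 : A (0, 0) = 0 := by simp [hA_def]
    rw [h0, zero_add]
    have hterm : ∀ j : ℕ, A (0, j + 1)
        = (1 / 2) * ((x / 2) ^ (1 + 2 * j) / (Nat.factorial j * Nat.factorial (1 + j))) := by
      intro j
      rw [hA_def]
      simp only
      rw [show 0 + 2 * (j + 1) - 1 = 1 + 2 * j from by omega,
        show 0 + (j + 1) = j + 1 from by omega, show (1 : ℕ) + j = j + 1 from by omega]
      have h1 : ((j.factorial : ℝ)) ≠ 0 := by positivity
      push_cast [Nat.factorial_succ]
      field_simp
    rw [tsum_congr hterm, tsum_mul_left, besselI]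
    ring
  have hA1 : ∀ m : ℕ, (∑' k : ℕ, A (m + 1, k)) = t / 2 * (t ^ m * besselI m x) := by
    intro m
    have hterm : ∀ k : ℕ, A (m + 1, k)
        = t / 2 * (t ^ m * ((x / 2) ^ (m + 2 * k)
            / (Nat.factorial k * Nat.factorial (m + k)))) := by
      intro k
      rw [hA_def]
      simp only
      rw [show m + 1 + 2 * k - 1 = m + 2 * k from by omega,
        show m + 1 + k = (m + k) + 1 from by omega]
      have h1 : ((k.factorial : ℝ)) ≠ 0 := by positivity
      have h2 : (((m + k).factorial : ℝ)) ≠ 0 := by positivity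
      push_cast [Nat.factorial_succ, pow_succ]
      field_simp
    rw [tsum_congr hterm, tsum_mul_left, tsum_mul_left, besselI]
  have HA : HasSum (fun n : ℕ => ∑' k : ℕ, A (n, k)) (∑' p : ℕ × ℕ, A p) :=
    hAsum.hasSum.prod_fiberwise (fun n => (hAk n).hasSum)
  have hAval : (∑' p : ℕ × ℕ, A p)
      = besselI 1 x / 2 + t / 2 * (∑' n : ℕ, t ^ n * besselI n x) := by
    rw [← HA.tsum_eq, Summable.tsum_eq_zero_add HA.summable, hA0]
    congr 1
    rw [tsum_congr hA1, tsum_mul_left]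
  have hB1 : ∀ n : ℕ, (∑' k : ℕ, B (n, k))
      = 1 / (2 * t) * (t ^ (n + 1) * besselI (n + 1) x) := by
    intro n
    rw [Summable.tsum_eq_zero_add (hBk n)]
    have h0 : B (n, 0) = 0 := by simp [hB_def]
    rw [h0, zero_add]
    have hterm : ∀ j : ℕ, B (n, j + 1)
        = 1 / (2 * t) * (t ^ (n + 1) * ((x / 2) ^ ((n + 1) + 2 * j)
            / (Nat.factorial j * Nat.factorial ((n + 1) + j)))) := by
      intro j
      rw [hB_def]
      simp only
      rw [show n + 2 * (j + 1) - 1 = (n + 1) + 2 * j from by omega,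
        show n + (j + 1) = (n + 1) + j from by omega,
        show (n + 1) + j = (n + j) + 1 from by omega]
      have h1 : ((j.factorial : ℝ)) ≠ 0 := by positivity
      have h2 : (((n + j).factorial : ℝ)) ≠ 0 := by positivity
      push_cast [Nat.factorial_succ, pow_succ]
      field_simp
    rw [tsum_congr hterm, tsum_mul_left, tsum_mul_left, besselI]
  have HB : HasSum (fun n : ℕ => ∑' k : ℕ, B (n, k)) (∑' p : ℕ × ℕ, B p) :=
    hBsum.hasSum.prod_fiberwise (fun n => (hBk n).hasSum)
  have hshift : (∑' n : ℕ, t ^ (n + 1) * besselI (n + 1) x)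
      = (∑' n : ℕ, t ^ n * besselI n x) - besselI 0 x := by
    rw [Summable.tsum_eq_zero_add (hS x).summable, pow_zero, one_mul]
    ring
  have hBval : (∑' p : ℕ × ℕ, B p)
      = 1 / (2 * t) * ((∑' n : ℕ, t ^ n * besselI n x) - besselI 0 x) := by
    rw [← HB.tsum_eq, tsum_congr hB1, tsum_mul_left, hshift]
  rw [tsum_congr hAB, Summable.tsum_add hAsum hBsum, hAval, hBval]
  field_simp
  ring
end

section
/- For every real t with 0 < t < 1 and every real x ≥ 0, ∫_0^x I_0(s) · exp(−s(t + 1/t)/2) ds = (4t/(1 − t²)) · (1 − exp(−x(t + 1/t)/2) · Σ_{n=0}^∞ t^n I_n(x)) + (2t/(1 − t²)) · (exp(−x(t + 1/t)/2) · I_0(x) − 1). -/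
open MeasureTheory Real intervalIntegral

set_option maxHeartbeats 1000000

lemma term_bound (n k : ℕ) (x R : ℝ) (hR : |x| ≤ R) :
    |(x / 2) ^ (n + 2 * k) / (Nat.factorial k * Nat.factorial (n + k))|
      ≤ ((R/2)^n / Nat.factorial n) * (((R/2)^2)^k / Nat.factorial k) := by
  have hR0 : (0:ℝ) ≤ R := le_trans (abs_nonneg x) hR
  have h1 : |(x / 2) ^ (n + 2 * k)| ≤ (R/2) ^ (n + 2*k) := by
    rw [abs_pow, abs_div, abs_two]
    exact pow_le_pow_left₀ (by positivity) (by linarith) _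
  have hfac : (Nat.factorial n * Nat.factorial k : ℕ) ≤ Nat.factorial k * Nat.factorial (n+k) := by
    calc Nat.factorial n * Nat.factorial k ≤ Nat.factorial (n+k) :=
          Nat.le_of_dvd (Nat.factorial_pos _) (Nat.factorial_mul_factorial_dvd_factorial_add n k)
      _ ≤ Nat.factorial k * Nat.factorial (n+k) :=
          Nat.le_mul_of_pos_left _ (Nat.factorial_pos _)
  have hfacR : ((Nat.factorial n * Nat.factorial k : ℕ) : ℝ) ≤
      ((Nat.factorial k * Nat.factorial (n+k) : ℕ) : ℝ) := Nat.cast_le.mpr hfac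
  rw [abs_div]
  have hden : |(((Nat.factorial k : ℕ) : ℝ) * ((Nat.factorial (n+k) : ℕ) : ℝ))| =
      ((Nat.factorial k * Nat.factorial (n+k) : ℕ) : ℝ) := by
    push_cast; rw [abs_of_nonneg]; positivity
  calc |(x/2) ^ (n+2*k)| / |((Nat.factorial k : ℝ) * (Nat.factorial (n+k) : ℝ))|
      = |(x/2) ^ (n+2*k)| / ((Nat.factorial k * Nat.factorial (n+k) : ℕ) : ℝ) := by rw [hden]
    _ ≤ (R/2)^(n+2*k) / ((Nat.factorial n * Nat.factorial k : ℕ) : ℝ) := by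
        apply div_le_div₀ (by positivity) h1 (by positivity) hfacR
    _ = ((R/2)^n / Nat.factorial n) * (((R/2)^2)^k / Nat.factorial k) := by
        rw [pow_add, pow_mul]; push_cast; ring

lemma besselI_summable (n : ℕ) (x : ℝ) :
    Summable (fun k : ℕ => (x / 2) ^ (n + 2 * k) / (Nat.factorial k * Nat.factorial (n + k))) := by
  apply Summable.of_norm_bounded (((Real.summable_pow_div_factorial ((|x|/2)^2)).mul_left
    ((|x|/2)^n / Nat.factorial n)))
  intro k
  exact term_bound n k x |x| le_rfl

/-- constant: sum of the k-series -/
noncomputable def CC (R : ℝ) : ℝ := ∑' k : ℕ, ((R/2)^2)^k / Nat.factorial k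
/-- constant: sum of the n-series -/
noncomputable def DD (R : ℝ) : ℝ := ∑' m : ℕ, (R/2)^m / Nat.factorial m

lemma CC_nonneg (R : ℝ) : 0 ≤ CC R := tsum_nonneg fun k => by positivity

lemma besselI_abs_le (n : ℕ) (x R : ℝ) (hR : |x| ≤ R) :
    |besselI n x| ≤ ((R/2)^n / Nat.factorial n) * CC R := by
  have hR0 : (0:ℝ) ≤ R := le_trans (abs_nonneg x) hR
  rw [besselI]
  calc |∑' k : ℕ, (x / 2) ^ (n + 2 * k) / (Nat.factorial k * Nat.factorial (n + k))|
      ≤ ∑' k : ℕ, |(x / 2) ^ (n + 2 * k) / (Nat.factorial k * Nat.factorial (n + k))| := by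
        have h := (besselI_summable n x).abs
        simp only [← Real.norm_eq_abs] at h ⊢
        exact norm_tsum_le_tsum_norm h
    _ ≤ ∑' k : ℕ, ((R/2)^n / Nat.factorial n) * (((R/2)^2)^k / Nat.factorial k) := by
        apply Summable.tsum_le_tsum (fun k => term_bound n k x R hR) ((besselI_summable n x).abs)
        exact (Real.summable_pow_div_factorial ((R/2)^2)).mul_left _
    _ = ((R/2)^n / Nat.factorial n) * CC R := by
        rw [tsum_mul_left]; rfl

lemma besselI_abs_le' (n : ℕ) (x R : ℝ) (hR : |x| ≤ R) :
    |besselI n x| ≤ DD R * CC R := by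
  have hR0 : (0:ℝ) ≤ R := le_trans (abs_nonneg x) hR
  refine (besselI_abs_le n x R hR).trans ?_
  apply mul_le_mul_of_nonneg_right _ (CC_nonneg R)
  exact Summable.le_tsum (Real.summable_pow_div_factorial (R/2)) n (fun m _ => by positivity)

lemma hasDerivAt_term (m : ℕ) (c x : ℝ) :
    HasDerivAt (fun y : ℝ => (y/2)^m / c) (((m : ℝ) * (x/2)^(m-1) * (1/2)) / c) x :=
  (((hasDerivAt_id x).div_const 2).pow m).div_const c

lemma summable_k_mul (s : ℝ) : Summable (fun k : ℕ => (k : ℝ) * s^k / Nat.factorial k) := by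
  rw [← summable_nat_add_iff 1]
  refine ((Real.summable_pow_div_factorial s).mul_left s).congr fun k => ?_
  have hk : (Nat.factorial k : ℝ) ≠ 0 := Nat.cast_ne_zero.mpr (Nat.factorial_ne_zero k)
  rw [Nat.factorial_succ]; push_cast; field_simp; ring

lemma summable_deriv_bound (n : ℕ) (c s : ℝ) :
    Summable (fun k : ℕ => ((n + 2*k : ℕ) : ℝ) * (c * s^k) / (2 * Nat.factorial k)) := by
  have h1 := (Real.summable_pow_div_factorial s).mul_left ((n : ℝ) * c / 2)
  have h2 := (summable_k_mul s).mul_left c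
  refine (h1.add h2).congr fun k => ?_
  have hk : (Nat.factorial k : ℝ) ≠ 0 := Nat.cast_ne_zero.mpr (Nat.factorial_ne_zero k)
  push_cast; field_simp

lemma deriv_term_bound (n k : ℕ) (y R : ℝ) (hR : |y| ≤ R) (h2 : (2:ℝ) ≤ R) :
    ‖((n + 2*k : ℕ) : ℝ) * (y/2)^(n+2*k-1) * (1/2) / (Nat.factorial k * Nat.factorial (n+k))‖
      ≤ ((n + 2*k : ℕ) : ℝ) * ((R/2)^n * ((R/2)^2)^k) / (2 * Nat.factorial k) := by
  have h1 : |y/2| ≤ R/2 := by rw [abs_div, abs_two]; linarith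
  have hp : |(y/2)^(n+2*k-1)| ≤ (R/2)^(n+2*k) := by
    rw [abs_pow]
    calc |y/2|^(n+2*k-1) ≤ (R/2)^(n+2*k-1) := pow_le_pow_left₀ (abs_nonneg _) h1 _
      _ ≤ (R/2)^(n+2*k) := pow_le_pow_right₀ (by linarith) (Nat.sub_le _ _)
  rw [Real.norm_eq_abs, abs_div, abs_mul, abs_mul]
  have e1 : |((n+2*k:ℕ):ℝ)| = ((n+2*k:ℕ):ℝ) := abs_of_nonneg (Nat.cast_nonneg _)
  have e2 : |(1:ℝ)/2| = 1/2 := by norm_num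
  have e3 : |(Nat.factorial k:ℝ) * (Nat.factorial (n+k):ℝ)| =
      (Nat.factorial k:ℝ) * (Nat.factorial (n+k):ℝ) := abs_of_nonneg (by positivity)
  rw [e1, e2, e3]
  have hfk : (1:ℝ) ≤ (Nat.factorial (n+k) : ℝ) := by
    exact_mod_cast Nat.one_le_iff_ne_zero.mpr (Nat.factorial_ne_zero _)
  calc ((n+2*k:ℕ):ℝ) * |(y/2)^(n+2*k-1)| * (1/2) / ((Nat.factorial k:ℝ) * (Nat.factorial (n+k):ℝ))
      ≤ ((n+2*k:ℕ):ℝ) * (R/2)^(n+2*k) * (1/2) / ((Nat.factorial k:ℝ) * 1) := by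
        apply div_le_div₀ (by positivity) ?_ (by positivity) ?_
        · exact mul_le_mul_of_nonneg_right
            (mul_le_mul_of_nonneg_left hp (Nat.cast_nonneg _)) (by norm_num)
        · exact mul_le_mul_of_nonneg_left hfk (by positivity)
    _ = ((n + 2*k : ℕ) : ℝ) * ((R/2)^n * ((R/2)^2)^k) / (2 * Nat.factorial k) := by
        rw [pow_add, pow_mul]; ring

lemma summable_deriv_terms (n : ℕ) (x : ℝ) :
    Summable (fun k : ℕ => ((n + 2*k : ℕ) : ℝ) * (x/2)^(n+2*k-1) * (1/2) /
      (Nat.factorial k * Nat.factorial (n+k))) := by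
  set R := |x| + 2 with hRdef
  have h2 : (2:ℝ) ≤ R := le_add_of_nonneg_left (abs_nonneg x)
  have hR : |x| ≤ R := by simp [hRdef]
  exact Summable.of_norm_bounded (summable_deriv_bound n ((R/2)^n) ((R/2)^2))
    (fun k => deriv_term_bound n k x R hR h2)

lemma hasDerivAt_besselI_tsum (n : ℕ) (x : ℝ) :
    HasDerivAt (besselI n)
      (∑' k : ℕ, ((n + 2*k : ℕ) : ℝ) * (x/2)^(n+2*k-1) * (1/2) /
        (Nat.factorial k * Nat.factorial (n+k))) x := by
  set R := |x| + 2 with hRdef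
  have h2 : (2:ℝ) ≤ R := le_add_of_nonneg_left (abs_nonneg x)
  have hmem : x ∈ Set.Ioo (-R) R := by
    constructor
    · have := neg_abs_le x; simp only [hRdef]; linarith
    · have := le_abs_self x; simp only [hRdef]; linarith
  have h0mem : (0:ℝ) ∈ Set.Ioo (-R) R := by
    constructor <;> simp only [hRdef] <;> [linarith [abs_nonneg x]; linarith [abs_nonneg x]]
  have key := hasDerivAt_tsum_of_isPreconnected
    (u := fun k => ((n + 2*k : ℕ) : ℝ) * ((R/2)^n * ((R/2)^2)^k) / (2 * Nat.factorial k))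
    (summable_deriv_bound n ((R/2)^n) ((R/2)^2)) isOpen_Ioo (convex_Ioo (-R) R).isPreconnected
    (g := fun (k : ℕ) (y : ℝ) => (y/2)^(n+2*k) / (Nat.factorial k * Nat.factorial (n+k)))
    (g' := fun (k : ℕ) (y : ℝ) => ((n + 2*k : ℕ) : ℝ) * (y/2)^(n+2*k-1) * (1/2) /
        (Nat.factorial k * Nat.factorial (n+k)))
    (fun k y _ => hasDerivAt_term _ _ y)
    (fun k y hy => deriv_term_bound n k y R (abs_le.mpr ⟨hy.1.le, hy.2.le⟩) h2)
    h0mem (besselI_summable n 0) hmem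
  exact key

lemma hasDerivAt_besselI_zero (x : ℝ) : HasDerivAt (besselI 0) (besselI 1 x) x := by
  have h := hasDerivAt_besselI_tsum 0 x
  convert h using 1
  rw [besselI, Summable.tsum_eq_zero_add (summable_deriv_terms 0 x)]
  simp only [Nat.mul_zero, Nat.add_zero, Nat.cast_zero, zero_mul, zero_div, zero_add,
    Nat.zero_add]
  refine tsum_congr fun k => ?_
  have he : 2 * (k+1) - 1 = 1 + 2*k := by omega
  rw [he, show (1:ℕ)+k = k+1 from Nat.add_comm 1 k, Nat.factorial_succ]
  have hk : (Nat.factorial k : ℝ) ≠ 0 := Nat.cast_ne_zero.mpr (Nat.factorial_ne_zero k)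
  push_cast
  field_simp

lemma hasDerivAt_besselI_succ (n : ℕ) (x : ℝ) :
    HasDerivAt (besselI (n+1)) ((besselI n x + besselI (n+2) x) / 2) x := by
  have h := hasDerivAt_besselI_tsum (n+1) x
  convert h using 1
  set A : ℕ → ℝ := fun k => (x/2)^(n+2*k) / (Nat.factorial k * Nat.factorial (n+k)) / 2 with hA
  set B : ℕ → ℝ := fun k => (k : ℝ) * (x/2)^(n+2*k) * (1/2) /
      (Nat.factorial k * Nat.factorial (n+1+k)) with hB
  have hAsum : Summable A := (besselI_summable n x).div_const 2
  have hBsum : Summable B := by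
    apply Summable.of_norm_bounded
      (g := fun k : ℕ => ((|x|/2)^n / 2) * ((k:ℝ) * ((|x|/2)^2)^k / Nat.factorial k))
      (((summable_k_mul ((|x|/2)^2)).mul_left ((|x|/2)^n / 2)))
    intro k
    have hfk : (1:ℝ) ≤ (Nat.factorial (n+1+k) : ℝ) := by
      exact_mod_cast Nat.one_le_iff_ne_zero.mpr (Nat.factorial_ne_zero _)
    have hxp : |(x/2)^(n+2*k)| = (|x|/2)^n * ((|x|/2)^2)^k := by
      rw [abs_pow, abs_div, abs_two, pow_add, pow_mul]
    rw [hB, Real.norm_eq_abs, abs_div, abs_mul, abs_mul]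
    have e1 : |(k:ℝ)| = (k:ℝ) := abs_of_nonneg (Nat.cast_nonneg _)
    have e2 : |(1:ℝ)/2| = 1/2 := by norm_num
    have e3 : |(Nat.factorial k:ℝ) * (Nat.factorial (n+1+k):ℝ)| =
        (Nat.factorial k:ℝ) * (Nat.factorial (n+1+k):ℝ) := abs_of_nonneg (by positivity)
    rw [e1, e2, e3, hxp]
    calc (k:ℝ) * ((|x|/2)^n * ((|x|/2)^2)^k) * (1/2) /
          ((Nat.factorial k:ℝ) * (Nat.factorial (n+1+k):ℝ))
        ≤ (k:ℝ) * ((|x|/2)^n * ((|x|/2)^2)^k) * (1/2) / ((Nat.factorial k:ℝ) * 1) := by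
          apply div_le_div₀ (by positivity) le_rfl (by positivity)
          exact mul_le_mul_of_nonneg_left hfk (by positivity)
      _ = ((|x|/2)^n / 2) * ((k:ℝ) * ((|x|/2)^2)^k / Nat.factorial k) := by ring
  have hsplit : ∀ k : ℕ, ((n+1 + 2*k : ℕ) : ℝ) * (x/2)^(n+1+2*k-1) * (1/2) /
      (Nat.factorial k * Nat.factorial (n+1+k)) = A k + B k := by
    intro k
    have he : n+1+2*k-1 = n+2*k := by omega
    simp only [he, hA, hB]
    have hfac : (Nat.factorial (n+1+k) : ℝ) = ((n+1+k : ℕ) : ℝ) * Nat.factorial (n+k) := by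
      have : Nat.factorial (n+1+k) = (n+1+k) * Nat.factorial (n+k) := by
        have : n+1+k = (n+k)+1 := by omega
        rw [this, Nat.factorial_succ]
      exact_mod_cast this
    have hk : (Nat.factorial k : ℝ) ≠ 0 := Nat.cast_ne_zero.mpr (Nat.factorial_ne_zero k)
    have hnk : (Nat.factorial (n+k) : ℝ) ≠ 0 := Nat.cast_ne_zero.mpr (Nat.factorial_ne_zero _)
    have hnk1 : ((n+1+k : ℕ) : ℝ) ≠ 0 := by positivity
    rw [hfac]
    push_cast
    field_simp
    ring
  rw [tsum_congr hsplit, Summable.tsum_add hAsum hBsum]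
  have hAt : ∑' k, A k = besselI n x / 2 := by
    simp only [hA]; rw [besselI]; exact tsum_div_const
  have hBt : ∑' k, B k = besselI (n+2) x / 2 := by
    rw [Summable.tsum_eq_zero_add hBsum]
    have hB0 : B 0 = 0 := by simp [hB]
    rw [hB0, zero_add, besselI, ← tsum_div_const]
    refine tsum_congr fun k => ?_
    simp only [hB]
    have he : n + 2*(k+1) = n+2+2*k := by omega
    rw [he, Nat.factorial_succ]
    have hfac : (Nat.factorial (n+1+(k+1)) : ℝ) = (Nat.factorial (n+2+k) : ℝ) := by
      norm_num; congr 1; omega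
    rw [hfac]
    have hk : (Nat.factorial k : ℝ) ≠ 0 := Nat.cast_ne_zero.mpr (Nat.factorial_ne_zero k)
    have hnk : (Nat.factorial (n+2+k) : ℝ) ≠ 0 := Nat.cast_ne_zero.mpr (Nat.factorial_ne_zero _)
    push_cast
    field_simp
  rw [hAt, hBt]
  ring

noncomputable def dI : ℕ → ℝ → ℝ
  | 0, x => besselI 1 x
  | (n+1), x => (besselI n x + besselI (n+2) x) / 2

lemma hasDerivAt_besselI (n : ℕ) (x : ℝ) : HasDerivAt (besselI n) (dI n x) x := by
  cases n with
  | zero => exact hasDerivAt_besselI_zero x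
  | succ n => exact hasDerivAt_besselI_succ n x

lemma dI_abs_le (n : ℕ) (x R : ℝ) (hR : |x| ≤ R) : |dI n x| ≤ DD R * CC R := by
  cases n with
  | zero => exact besselI_abs_le' 1 x R hR
  | succ n =>
      have h1 := besselI_abs_le' n x R hR
      have h2 := besselI_abs_le' (n+2) x R hR
      calc |dI (n+1) x| ≤ (|besselI n x| + |besselI (n+2) x|)/2 := by
            rw [dI]; rw [abs_div, abs_two]
            exact div_le_div_of_nonneg_right (abs_add_le _ _) (by norm_num) |>.trans_eq rfl
        _ ≤ DD R * CC R := by linarith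

lemma besselI_zero_left : besselI 0 0 = 1 := by
  rw [besselI]
  rw [tsum_eq_single 0]
  · norm_num
  · intro k hk
    have : (0:ℝ)/2 = 0 := by norm_num
    rw [this, zero_pow (by omega : 0 + 2*k ≠ 0)]
    simp
  
lemma besselI_succ_zero (n : ℕ) : besselI (n+1) 0 = 0 := by
  rw [besselI]
  have : ∀ k : ℕ, ((0:ℝ)/2) ^ (n+1+2*k) / (Nat.factorial k * Nat.factorial (n+1+k)) = 0 := by
    intro k
    rw [show (0:ℝ)/2 = 0 by norm_num, zero_pow (by omega : n+1+2*k ≠ 0), zero_div]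
  rw [tsum_congr this, tsum_zero]

lemma summable_tpow {t : ℝ} (ht0 : 0 < t) (ht1 : t < 1) (f : ℕ → ℝ) (C : ℝ)
    (hC : ∀ n, |f n| ≤ C) : Summable fun n : ℕ => t^n * f n := by
  apply Summable.of_norm_bounded (g := fun n => C * t^n)
    ((summable_geometric_of_lt_one ht0.le ht1).mul_left C)
  intro n
  rw [Real.norm_eq_abs, abs_mul, abs_pow, abs_of_pos ht0, mul_comm C]
  exact mul_le_mul_of_nonneg_left (hC n) (by positivity)

lemma summable_S {t : ℝ} (ht0 : 0 < t) (ht1 : t < 1) (m : ℕ) (x : ℝ) :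
    Summable fun n : ℕ => t^n * besselI (n+m) x :=
  summable_tpow ht0 ht1 _ (DD |x| * CC |x|) (fun n => besselI_abs_le' (n+m) x |x| le_rfl)

lemma summable_dIS {t : ℝ} (ht0 : 0 < t) (ht1 : t < 1) (x : ℝ) :
    Summable fun n : ℕ => t^n * dI n x :=
  summable_tpow ht0 ht1 _ (DD |x| * CC |x|) (fun n => dI_abs_le n x |x| le_rfl)

lemma hasDerivAt_S {t : ℝ} (ht0 : 0 < t) (ht1 : t < 1) (x : ℝ) :
    HasDerivAt (fun y => ∑' n : ℕ, t^n * besselI n y) (∑' n : ℕ, t^n * dI n x) x := by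
  set R := |x| + 2 with hRdef
  have hmem : x ∈ Set.Ioo (-R) R := by
    constructor
    · have := neg_abs_le x; simp only [hRdef]; linarith
    · have := le_abs_self x; simp only [hRdef]; linarith
  have h0mem : (0:ℝ) ∈ Set.Ioo (-R) R := by
    constructor <;> simp only [hRdef] <;> [linarith [abs_nonneg x]; linarith [abs_nonneg x]]
  exact hasDerivAt_tsum_of_isPreconnected
    (u := fun n : ℕ => (DD R * CC R) * t^n)
    ((summable_geometric_of_lt_one ht0.le ht1).mul_left _)
    isOpen_Ioo (convex_Ioo (-R) R).isPreconnected
    (g := fun (n : ℕ) (y : ℝ) => t^n * besselI n y)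
    (g' := fun (n : ℕ) (y : ℝ) => t^n * dI n y)
    (fun n y _ => (hasDerivAt_besselI n y).const_mul _)
    (fun n y hy => by
      rw [Real.norm_eq_abs, abs_mul, abs_pow, abs_of_pos ht0, mul_comm]
      exact mul_le_mul_of_nonneg_right
        (dI_abs_le n y R (abs_le.mpr ⟨hy.1.le, hy.2.le⟩)) (by positivity))
    h0mem (by simpa using summable_S ht0 ht1 0 0) hmem

lemma deriv_sum_eq {t : ℝ} (ht0 : 0 < t) (ht1 : t < 1) (x : ℝ) :
    ∑' n : ℕ, t^n * dI n x =
      ((t + 1/t)/2) * (∑' n : ℕ, t^n * besselI n x)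
        + besselI 1 x / 2 - besselI 0 x / (2*t) := by
  have ht : t ≠ 0 := ne_of_gt ht0
  have hS0 := summable_S ht0 ht1 0 x
  have hS1 := summable_S ht0 ht1 1 x
  have hS2 := summable_S ht0 ht1 2 x
  set Sx := ∑' n : ℕ, t^n * besselI n x with hSx
  set T := ∑' n : ℕ, t^n * besselI (n+2) x with hT
  -- relation between Sx and T
  have e1 : Sx = besselI 0 x + ∑' n : ℕ, t^(n+1) * besselI (n+1) x := by
    rw [hSx]
    have h0 : Summable fun n : ℕ => t^n * besselI n x := by simpa using hS0
    rw [Summable.tsum_eq_zero_add (by simpa using hS0)]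
    simp
  have e2 : ∑' n : ℕ, t^(n+1) * besselI (n+1) x
      = t * besselI 1 x + ∑' n : ℕ, t^(n+2) * besselI (n+2) x := by
    have hs : Summable fun n : ℕ => t^(n+1) * besselI (n+1) x := by
      refine (hS1.mul_left t).congr fun n => ?_
      show t * (t^n * besselI (n+1) x) = t^(n+1) * besselI (n+1) x
      ring
    rw [Summable.tsum_eq_zero_add hs]
    norm_num
  have e3 : ∑' n : ℕ, t^(n+2) * besselI (n+2) x = t^2 * T := by
    rw [hT, ← tsum_mul_left]
    refine tsum_congr fun n => ?_
    ring
  have hrel : t^2 * T = Sx - besselI 0 x - t * besselI 1 x := by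
    rw [e1, e2, e3]; ring
  -- compute the derivative sum
  have hd := summable_dIS ht0 ht1 x
  rw [Summable.tsum_eq_zero_add hd]
  have hterm : ∀ n : ℕ, t^(n+1) * dI (n+1) x
      = t * (t^n * besselI n x) / 2 + t * (t^n * besselI (n+2) x) / 2 := by
    intro n
    rw [dI]
    ring
  have hsA : Summable fun n : ℕ => t * (t^n * besselI n x) / 2 :=
    ((hS0.mul_left t).div_const 2).congr fun n => by ring
  have hsB : Summable fun n : ℕ => t * (t^n * besselI (n+2) x) / 2 :=
    ((hS2.mul_left t).div_const 2).congr fun n => by ring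
  rw [tsum_congr hterm, Summable.tsum_add hsA hsB]
  have hta : ∑' n : ℕ, t * (t^n * besselI n x) / 2 = t * Sx / 2 := by
    rw [hSx, ← tsum_mul_left, ← tsum_div_const]
  have htb : ∑' n : ℕ, t * (t^n * besselI (n+2) x) / 2 = t * T / 2 := by
    rw [hT, ← tsum_mul_left, ← tsum_div_const]
  rw [hta, htb]
  simp only [pow_zero, one_mul, dI]
  field_simp
  linear_combination hrel

/-- Closed form in terms of the half-space generating function for
`∫₀ˣ I₀(s) exp(−s(t+1/t)/2) ds` when `0 < t < 1`. -/
theorem integral_besselI_zero_exp (t x : ℝ) (ht0 : 0 < t) (ht1 : t < 1) (hx : 0 ≤ x) :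
    (∫ s in (0:ℝ)..x, besselI 0 s * Real.exp (-s * (t + 1 / t) / 2)) =
      (4 * t / (1 - t ^ 2)) *
        (1 - Real.exp (-x * (t + 1 / t) / 2) * ∑' n : ℕ, t ^ n * besselI n x) +
      (2 * t / (1 - t ^ 2)) *
        (Real.exp (-x * (t + 1 / t) / 2) * besselI 0 x - 1) := by
  have ht : t ≠ 0 := ne_of_gt ht0
  have ht2 : 1 - t^2 ≠ 0 := by nlinarith
  set Φ : ℝ → ℝ := fun s =>
    (-4*t/(1-t^2)) * (Real.exp (-s*(t+1/t)/2) * ∑' n : ℕ, t^n * besselI n s)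
      + (2*t/(1-t^2)) * (Real.exp (-s*(t+1/t)/2) * besselI 0 s) with hΦdef
  have hexp : ∀ s : ℝ, HasDerivAt (fun y : ℝ => Real.exp (-y*(t+1/t)/2))
      (Real.exp (-s*(t+1/t)/2) * ((-(t+1/t))/2)) s := by
    intro s
    have h0 : (fun y : ℝ => -y*(t+1/t)/2) = fun y : ℝ => ((-(t+1/t))/2) * y := by
      funext y; ring
    have h1 : HasDerivAt (fun y : ℝ => -y*(t+1/t)/2) ((-(t+1/t))/2) s := by
      rw [h0]; simpa using (hasDerivAt_id s).const_mul ((-(t+1/t))/2)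
    exact h1.exp
  have hΦderiv : ∀ s : ℝ, HasDerivAt Φ (besselI 0 s * Real.exp (-s*(t+1/t)/2)) s := by
    intro s
    have hS : HasDerivAt (fun y => ∑' n : ℕ, t^n * besselI n y)
        (((t + 1/t)/2) * (∑' n : ℕ, t^n * besselI n s)
          + besselI 1 s / 2 - besselI 0 s / (2*t)) s := by
      have := hasDerivAt_S ht0 ht1 s
      rwa [deriv_sum_eq ht0 ht1 s] at this
    have hprod1 := (hexp s).mul hS
    have hprod2 := (hexp s).mul (hasDerivAt_besselI_zero s)
    have hsum := (hprod1.const_mul (-4*t/(1-t^2))).add (hprod2.const_mul (2*t/(1-t^2)))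
    refine hsum.congr_deriv ?_
    field_simp
    ring
  have hcont : Continuous (fun s => besselI 0 s * Real.exp (-s * (t + 1 / t) / 2)) := by
    have h1 : Differentiable ℝ (besselI 0) := fun s => (hasDerivAt_besselI_zero s).differentiableAt
    exact h1.continuous.mul (Real.continuous_exp.comp (by continuity))
  have hFTC := intervalIntegral.integral_eq_sub_of_hasDerivAt
    (f := Φ) (f' := fun s => besselI 0 s * Real.exp (-s * (t + 1 / t) / 2))
    (fun s _ => by simpa using hΦderiv s) (hcont.intervalIntegrable 0 x)
  rw [hFTC]
  have hS0 : (∑' n : ℕ, t^n * besselI n 0) = 1 := by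
    rw [tsum_eq_single 0]
    · simp [besselI_zero_left]
    · intro n hn
      cases n with
      | zero => exact absurd rfl hn
      | succ n => rw [besselI_succ_zero]; ring
  rw [hΦdef]
  simp only [neg_zero, zero_mul, mul_zero, Real.exp_zero, one_mul, hS0, besselI_zero_left]
  have he : ∀ s : ℝ, -s*(t+1/t)/2 = -s * (t + 1 / t) / 2 := fun s => rfl
  ring_nf
  rw [Real.exp_zero]
  ring
end

section
/- For every real t with 0 < t < 1 and every real x ≥ 0, ∫_0^x I_1(s) · exp(−s(t + 1/t)/2) ds = (2(1 + t²)/(1 − t²)) · (1 − exp(−x(t + 1/t)/2) · Σ_{n=0}^∞ t^n I_n(x)) + (2/(1 − t²)) · (exp(−x(t + 1/t)/2) · I_0(x) − 1). -/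
open MeasureTheory Real intervalIntegral

namespace BesselAux
noncomputable def a (n k : ℕ) (y : ℝ) : ℝ :=
  (y / 2) ^ (n + 2 * k) / (Nat.factorial k * Nat.factorial (n + k))
noncomputable def a' (n k : ℕ) (y : ℝ) : ℝ :=
  ((n + 2 * k : ℕ) : ℝ) * (y / 2) ^ (n + 2 * k - 1) / (2 * (Nat.factorial k * Nat.factorial (n + k)))
noncomputable def B (R : ℝ) (n k : ℕ) : ℝ :=
  (2 * R) ^ n / Nat.factorial n * ((2 * R) ^ 2) ^ k / Nat.factorial k

lemma fact_le {n k : ℕ} : ((Nat.factorial n : ℝ) * Nat.factorial k) ≤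
    (Nat.factorial k : ℝ) * Nat.factorial (n + k) := by
  rw [mul_comm]
  have hf : (Nat.factorial n : ℝ) ≤ (Nat.factorial (n + k) : ℝ) := by
    exact_mod_cast Nat.factorial_le (Nat.le_add_right n k)
  exact mul_le_mul_of_nonneg_left hf (by positivity)

lemma B_eq (R : ℝ) (n k : ℕ) :
    B R n k = (2 * R) ^ (n + 2 * k) / (Nat.factorial n * Nat.factorial k) := by
  unfold B; rw [pow_add, pow_mul]; ring

lemma abs_a_le (n k : ℕ) {z R : ℝ} (hR : 1 ≤ R) (hz : |z| ≤ R) : |a n k z| ≤ B R n k := by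
  have hR0 : (0:ℝ) < R := lt_of_lt_of_le one_pos hR
  have hz2 : |z / 2| ≤ 2 * R := by
    rw [abs_div, abs_two]
    nlinarith [abs_nonneg z]
  have hfpos : (0:ℝ) < (Nat.factorial k : ℝ) * Nat.factorial (n + k) := by
    exact_mod_cast Nat.mul_pos (Nat.factorial_pos k) (Nat.factorial_pos (n + k))
  have h1 : |a n k z| = |z / 2| ^ (n + 2 * k) /
      ((Nat.factorial k : ℝ) * Nat.factorial (n + k)) := by
    unfold a; rw [abs_div, abs_pow, abs_of_pos hfpos]
  rw [h1, B_eq]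
  exact div_le_div₀ (by positivity) (pow_le_pow_left₀ (abs_nonneg _) hz2 _) (by positivity) fact_le

lemma abs_a'_le (n k : ℕ) {z R : ℝ} (hR : 1 ≤ R) (hz : |z| ≤ R) : |a' n k z| ≤ B R n k := by
  have hR0 : (0:ℝ) < R := lt_of_lt_of_le one_pos hR
  have hz2 : |z / 2| ≤ R := by
    rw [abs_div, abs_two]
    nlinarith [abs_nonneg z]
  have key : ((n + 2 * k : ℕ) : ℝ) * |z / 2| ^ (n + 2 * k - 1) ≤ (2 * R) ^ (n + 2 * k) := by
    rcases Nat.eq_zero_or_pos (n + 2 * k) with h | h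
    · rw [h]; simp
    · obtain ⟨j, hj⟩ := Nat.exists_eq_add_of_le h
      rw [show n + 2 * k = j + 1 by omega]
      have h1 : ((j + 1 : ℕ) : ℝ) ≤ 2 ^ (j + 1) := by
        exact_mod_cast (Nat.lt_two_pow_self (n := j + 1)).le
      have h2 : |z / 2| ^ (j + 1 - 1) ≤ R ^ (j + 1) := by
        calc |z / 2| ^ j ≤ R ^ j := pow_le_pow_left₀ (abs_nonneg _) hz2 _
          _ ≤ R ^ (j + 1) := pow_le_pow_right₀ hR (by omega)
      calc ((j + 1 : ℕ) : ℝ) * |z / 2| ^ (j + 1 - 1) ≤ 2 ^ (j + 1) * R ^ (j + 1) := by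
            apply mul_le_mul h1 h2 (by positivity) (by positivity)
        _ = (2 * R) ^ (j + 1) := (mul_pow 2 R (j + 1)).symm
  have h1 : |a' n k z| = ((n + 2 * k : ℕ) : ℝ) * |z / 2| ^ (n + 2 * k - 1) /
      (2 * ((Nat.factorial k : ℝ) * Nat.factorial (n + k))) := by
    have hfpos : (0:ℝ) < 2 * ((Nat.factorial k : ℝ) * Nat.factorial (n + k)) := by
      have : (0:ℝ) < (Nat.factorial k : ℝ) * Nat.factorial (n + k) := by
        exact_mod_cast Nat.mul_pos (Nat.factorial_pos k) (Nat.factorial_pos (n + k))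
      linarith
    unfold a'
    rw [abs_div, abs_mul, abs_pow, abs_of_pos hfpos, Nat.abs_cast]
  rw [h1, B_eq]
  apply div_le_div₀ (by positivity) key (by positivity)
  have h0 : (0:ℝ) ≤ (Nat.factorial k : ℝ) * Nat.factorial (n + k) := by positivity
  linarith [fact_le (n := n) (k := k)]


lemma B_nonneg {R : ℝ} (hR : 0 ≤ R) (n k : ℕ) : 0 ≤ B R n k := by unfold B; positivity

lemma summable_B {R : ℝ} (hR : 0 ≤ R) : Summable (fun p : ℕ × ℕ => B R p.1 p.2) := by
  have := (Real.summable_pow_div_factorial (2 * R)).mul_of_nonneg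
    (Real.summable_pow_div_factorial ((2 * R) ^ 2)) ?_ ?_
  · apply this.congr; intro p; unfold B; ring
  · intro n; positivity
  · intro n; positivity

lemma summable_B_fiber {R : ℝ} (n : ℕ) : Summable (fun k => B R n k) := by
  have := (Real.summable_pow_div_factorial ((2 * R) ^ 2)).mul_left
    ((2 * R) ^ n / Nat.factorial n)
  apply this.congr; intro k; unfold B; ring

lemma besselI_eq (n : ℕ) (y : ℝ) : besselI n y = ∑' k, a n k y := rfl

lemma summable_a (n : ℕ) (y : ℝ) : Summable (fun k => a n k y) := by
  apply Summable.of_abs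
  apply Summable.of_nonneg_of_le (fun k => abs_nonneg _)
    (fun k => abs_a_le n k (R := |y| + 1) (by linarith [abs_nonneg y]) (by linarith [abs_nonneg y]))
  exact summable_B_fiber n

lemma hasSum_a (n : ℕ) (y : ℝ) : HasSum (fun k => a n k y) (besselI n y) := by
  rw [besselI_eq]; exact (summable_a n y).hasSum

lemma hasDerivAt_a (n k : ℕ) (y : ℝ) : HasDerivAt (fun z => a n k z) (a' n k y) y := by
  have h : HasDerivAt (fun z : ℝ => z / 2) (1 / 2) y := (hasDerivAt_id y).div_const 2
  have h2 := (h.pow (n + 2 * k)).div_const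
    ((Nat.factorial k * Nat.factorial (n + k) : ℕ) : ℝ)
  have ha : (fun z => a n k z) =
      (fun z : ℝ => (z / 2) ^ (n + 2 * k) / ((Nat.factorial k * Nat.factorial (n + k) : ℕ) : ℝ)) := by
    funext z; simp [a, Nat.cast_mul]
  rw [ha]
  refine h2.congr_deriv ?_
  simp only [a', Nat.cast_mul]
  push_cast
  ring

lemma hasDerivAt_besselI_tsum (n : ℕ) (y : ℝ) :
    HasDerivAt (besselI n) (∑' k, a' n k y) y := by
  set R : ℝ := |y| + 2 with hRdef
  have hR1 : 1 ≤ R := by rw [hRdef]; linarith [abs_nonneg y]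
  have key : HasDerivAt (fun z => ∑' k, a n k z) (∑' k, a' n k y) y := by
    apply hasDerivAt_tsum_of_isPreconnected (u := fun k => B R n k) (summable_B_fiber n)
      isOpen_Ioo (y₀ := y) (t := Set.Ioo (-R) R)
    · exact (convex_Ioo _ _).isPreconnected
    · intro k z _; exact hasDerivAt_a n k z
    · intro k z hz
      rw [Real.norm_eq_abs]
      exact abs_a'_le n k hR1 (le_of_lt (abs_lt.mpr ⟨hz.1, hz.2⟩))
    · constructor <;> [linarith [neg_abs_le y]; linarith [le_abs_self y]]
    · exact summable_a n y
    · constructor <;> [linarith [neg_abs_le y]; linarith [le_abs_self y]]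
  have : besselI n = fun z => ∑' k, a n k z := by funext z; exact besselI_eq n z
  rw [this]; exact key

lemma continuous_besselI (n : ℕ) : Continuous (besselI n) := by
  have : Differentiable ℝ (besselI n) := fun y => (hasDerivAt_besselI_tsum n y).differentiableAt
  exact this.continuous

lemma hasSum_a'_zero (y : ℝ) : HasSum (fun k => a' 0 k y) (besselI 1 y) := by
  have hvanish : ∀ m ∉ Set.range Nat.succ, a' 0 m y = 0 := by
    intro m hm
    have : m = 0 := by
      rcases m with _ | m
      · rfl
      · exact absurd ⟨m, rfl⟩ hm
    subst this; simp [a']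
  rw [← Function.Injective.hasSum_iff Nat.succ_injective hvanish]
  have heq : (fun k => a' 0 k y) ∘ Nat.succ = fun k => a 1 k y := by
    funext k
    show a' 0 (k + 1) y = a 1 k y
    unfold a a'
    rw [show 0 + 2 * (k + 1) - 1 = 1 + 2 * k by omega, show 0 + 2 * (k + 1) = 2 * k + 2 by omega,
      show 0 + (k + 1) = k + 1 by omega, show 1 + k = k + 1 by omega]
    have h1 : (Nat.factorial (k + 1) : ℝ) = (k + 1) * Nat.factorial k := by
      exact_mod_cast Nat.factorial_succ k
    push_cast [h1]
    have hk : (Nat.factorial k : ℝ) ≠ 0 := by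
      exact_mod_cast Nat.factorial_ne_zero k
    field_simp
  rw [heq]
  exact hasSum_a 1 y

lemma hasDerivAt_besselI_zero (y : ℝ) : HasDerivAt (besselI 0) (besselI 1 y) y := by
  rw [← (hasSum_a'_zero y).tsum_eq]
  exact hasDerivAt_besselI_tsum 0 y


lemma hasSum_a'_succ (n : ℕ) (y : ℝ) :
    HasSum (fun k => a' (n + 1) k y) (besselI n y / 2 + besselI (n + 2) y / 2) := by
  have h1 : HasSum (fun k => a n k y / 2) (besselI n y / 2) := (hasSum_a n y).div_const 2
  have h2 : HasSum (fun k => a' (n + 1) k y - a n k y / 2) (besselI (n + 2) y / 2) := by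
    have hvanish : ∀ m ∉ Set.range Nat.succ, a' (n + 1) m y - a n m y / 2 = 0 := by
      intro m hm
      have hm0 : m = 0 := by
        rcases m with _ | m
        · rfl
        · exact absurd ⟨m, rfl⟩ hm
      subst hm0
      unfold a a'
      rw [show (n + 1) + 2 * 0 - 1 = n by omega, show (n + 1) + 2 * 0 = n + 1 by omega,
        show n + 2 * 0 = n by omega, show (n + 1) + 0 = n + 1 by omega]
      have h1 : (Nat.factorial (n + 1) : ℝ) = (n + 1) * Nat.factorial n := by
        exact_mod_cast Nat.factorial_succ n
      push_cast [h1, Nat.factorial_zero]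
      have hn : (Nat.factorial n : ℝ) ≠ 0 := by exact_mod_cast Nat.factorial_ne_zero n
      field_simp
      ring
    rw [← Function.Injective.hasSum_iff Nat.succ_injective hvanish]
    have heq : (fun k => a' (n + 1) k y - a n k y / 2) ∘ Nat.succ
        = fun k => a (n + 2) k y / 2 := by
      funext k
      show a' (n + 1) (k + 1) y - a n (k + 1) y / 2 = a (n + 2) k y / 2
      unfold a a'
      rw [show (n + 1) + 2 * (k + 1) - 1 = n + 2 * k + 2 by omega,
        show (n + 1) + 2 * (k + 1) = n + 2 * k + 3 by omega,
        show n + 2 * (k + 1) = n + 2 * k + 2 by omega,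
        show (n + 2) + 2 * k = n + 2 * k + 2 by omega,
        show (n + 1) + (k + 1) = n + k + 2 by omega,
        show n + (k + 1) = n + k + 1 by omega,
        show (n + 2) + k = n + k + 2 by omega]
      have e1 : (Nat.factorial (k + 1) : ℝ) = (k + 1) * Nat.factorial k := by
        exact_mod_cast Nat.factorial_succ k
      have e2 : (Nat.factorial (n + k + 2) : ℝ) = (n + k + 2) * Nat.factorial (n + k + 1) := by
        exact_mod_cast Nat.factorial_succ (n + k + 1)
      have hk : (Nat.factorial k : ℝ) ≠ 0 := by exact_mod_cast Nat.factorial_ne_zero k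
      have hnk : (Nat.factorial (n + k + 1) : ℝ) ≠ 0 := by
        exact_mod_cast Nat.factorial_ne_zero (n + k + 1)
      push_cast [e1, e2]
      field_simp
      ring
    rw [heq]
    exact (hasSum_a (n + 2) y).div_const 2
  have h3 := h2.add h1
  simp only [sub_add_cancel] at h3
  convert h3 using 1
  ring


noncomputable def G (t y : ℝ) : ℝ := ∑' p : ℕ × ℕ, t ^ p.1 * a p.1 p.2 y

section gen
variable {t : ℝ}

lemma abs_c_le (ht0 : 0 ≤ t) (ht1 : t ≤ 1) (n k : ℕ) {z R : ℝ} (hR : 1 ≤ R) (hz : |z| ≤ R) :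
    ‖t ^ n * a n k z‖ ≤ B R n k := by
  rw [Real.norm_eq_abs, abs_mul, abs_pow, abs_of_nonneg ht0]
  calc t ^ n * |a n k z| ≤ 1 * |a n k z| :=
        mul_le_mul_of_nonneg_right (pow_le_one₀ ht0 ht1) (abs_nonneg _)
    _ = |a n k z| := one_mul _
    _ ≤ B R n k := abs_a_le n k hR hz

lemma abs_c'_le (ht0 : 0 ≤ t) (ht1 : t ≤ 1) (n k : ℕ) {z R : ℝ} (hR : 1 ≤ R) (hz : |z| ≤ R) :
    ‖t ^ n * a' n k z‖ ≤ B R n k := by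
  rw [Real.norm_eq_abs, abs_mul, abs_pow, abs_of_nonneg ht0]
  calc t ^ n * |a' n k z| ≤ 1 * |a' n k z| :=
        mul_le_mul_of_nonneg_right (pow_le_one₀ ht0 ht1) (abs_nonneg _)
    _ = |a' n k z| := one_mul _
    _ ≤ B R n k := abs_a'_le n k hR hz

lemma summable_c (ht0 : 0 ≤ t) (ht1 : t ≤ 1) (y : ℝ) :
    Summable (fun p : ℕ × ℕ => t ^ p.1 * a p.1 p.2 y) := by
  apply Summable.of_norm_bounded (summable_B (R := |y| + 1) (by positivity))
  exact fun p => abs_c_le ht0 ht1 p.1 p.2 (by linarith [abs_nonneg y]) (by linarith)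

lemma summable_c' (ht0 : 0 ≤ t) (ht1 : t ≤ 1) (y : ℝ) :
    Summable (fun p : ℕ × ℕ => t ^ p.1 * a' p.1 p.2 y) := by
  apply Summable.of_norm_bounded (summable_B (R := |y| + 1) (by positivity))
  exact fun p => abs_c'_le ht0 ht1 p.1 p.2 (by linarith [abs_nonneg y]) (by linarith)

lemma hasSum_G (ht0 : 0 ≤ t) (ht1 : t ≤ 1) (y : ℝ) :
    HasSum (fun n => t ^ n * besselI n y) (G t y) :=
  ((summable_c ht0 ht1 y).hasSum).prod_fiberwise (fun n => (hasSum_a n y).mul_left _)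

lemma G_zero (t : ℝ) : G t 0 = 1 := by
  have h : (fun p : ℕ × ℕ => t ^ p.1 * a p.1 p.2 (0:ℝ)) =
      fun p => if p = ((0,0) : ℕ × ℕ) then (1:ℝ) else 0 := by
    funext p
    rcases p with ⟨n, k⟩
    by_cases h : ((n,k) : ℕ × ℕ) = (0,0)
    · rw [Prod.mk.injEq] at h
      obtain ⟨h1, h2⟩ := h
      subst h1; subst h2
      simp [a]
    · rw [Prod.mk.injEq] at h
      have hnk : n + 2 * k ≠ 0 := by omega
      simp [a, zero_pow hnk]
      exact fun h1 h2 => h ⟨h1, h2⟩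
  rw [G, h]
  exact (hasSum_ite_eq ((0,0) : ℕ × ℕ) (1:ℝ)).tsum_eq

lemma besselI_zero_zero : besselI 0 (0:ℝ) = 1 := by
  have h : (fun k : ℕ => a 0 k (0:ℝ)) = fun k => if k = 0 then (1:ℝ) else 0 := by
    funext k
    rcases k with _ | m
    · simp [a]
    · have : 0 + 2 * (m + 1) ≠ 0 := by omega
      simp [a, zero_pow this]
  rw [besselI_eq, h]
  exact (hasSum_ite_eq (0 : ℕ) (1:ℝ)).tsum_eq

lemma G_hasDerivAt (ht0 : 0 < t) (ht1 : t ≤ 1) (y : ℝ) :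
    HasDerivAt (G t)
      ((t + 1/t)/2 * G t y + besselI 1 y / 2 - besselI 0 y / (2*t)) y := by
  set R : ℝ := |y| + 2 with hRdef
  have hR1 : 1 ≤ R := by rw [hRdef]; linarith [abs_nonneg y]
  have key : HasDerivAt (fun z => ∑' p : ℕ × ℕ, t ^ p.1 * a p.1 p.2 z)
      (∑' p : ℕ × ℕ, t ^ p.1 * a' p.1 p.2 y) y := by
    apply hasDerivAt_tsum_of_isPreconnected
      (g := fun (p : ℕ × ℕ) z => t ^ p.1 * a p.1 p.2 z)
      (g' := fun (p : ℕ × ℕ) z => t ^ p.1 * a' p.1 p.2 z)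
      (u := fun p : ℕ × ℕ => B R p.1 p.2)
      (summable_B (by linarith)) isOpen_Ioo (y₀ := y) (t := Set.Ioo (-R) R)
    · exact (convex_Ioo _ _).isPreconnected
    · intro p z _; exact (hasDerivAt_a p.1 p.2 z).const_mul _
    · intro p z hz
      exact abs_c'_le ht0.le ht1 p.1 p.2 hR1 (le_of_lt (abs_lt.mpr ⟨hz.1, hz.2⟩))
    · constructor <;> [linarith [neg_abs_le y]; linarith [le_abs_self y]]
    · exact summable_c ht0.le ht1 y
    · constructor <;> [linarith [neg_abs_le y]; linarith [le_abs_self y]]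
  have ht0' : t ≠ 0 := ne_of_gt ht0
  set g : ℕ → ℝ := fun n => if n = 0 then besselI 1 y
      else t ^ n * (besselI (n-1) y / 2 + besselI (n+1) y / 2) with hgdef
  have hfib : ∀ n, HasSum (fun k => t ^ n * a' n k y) (g n) := by
    intro n
    rcases n with _ | m
    · simpa [hgdef] using hasSum_a'_zero y
    · have h := (hasSum_a'_succ m y).mul_left (t ^ (m+1))
      simpa [hgdef] using h
  have hgS : HasSum g (∑' p : ℕ × ℕ, t ^ p.1 * a' p.1 p.2 y) :=
    ((summable_c' ht0.le ht1 y).hasSum).prod_fiberwise hfib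
  have hG : HasSum (fun n => t ^ n * besselI n y) (G t y) := hasSum_G ht0.le ht1 y
  have hv : HasSum (fun n => 1/(2*t) * (t ^ (n+1) * besselI (n+1) y))
      (1/(2*t) * (G t y - besselI 0 y)) := by
    apply HasSum.mul_left
    apply (hasSum_nat_add_iff (f := fun n => t ^ n * besselI n y) 1).mpr
    simpa using hG
  set u : ℕ → ℝ := fun n => if n = 0 then besselI 1 y / 2
      else t/2 * (t ^ (n-1) * besselI (n-1) y) with hudef
  have hu : HasSum u (t/2 * G t y + besselI 1 y / 2) := by
    have hshift : HasSum (fun n => u (n+1)) (t/2 * G t y) := by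
      have heq : (fun n => u (n+1)) = fun n => t/2 * (t ^ n * besselI n y) := by
        funext n; simp [hudef]
      rw [heq]; exact hG.mul_left _
    have h2 := (hasSum_nat_add_iff (f := u) 1).mp hshift
    simpa [hudef] using h2
  have htot : HasSum g
      (t/2 * G t y + besselI 1 y / 2 + 1/(2*t) * (G t y - besselI 0 y)) := by
    have h := hu.add hv
    have heq : (fun n => u n + 1/(2*t) * (t ^ (n+1) * besselI (n+1) y)) = g := by
      funext n
      rcases n with _ | m
      · show besselI 1 y / 2 + 1/(2*t) * (t ^ 1 * besselI 1 y) = besselI 1 y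
        field_simp; ring
      · show t/2 * (t ^ m * besselI m y) + 1/(2*t) * (t ^ (m+2) * besselI (m+2) y)
            = t ^ (m+1) * (besselI m y / 2 + besselI (m+2) y / 2)
        field_simp
        ring
    rw [heq] at h; exact h
  have hval := hgS.unique htot
  have hfinal : (∑' p : ℕ × ℕ, t ^ p.1 * a' p.1 p.2 y)
      = (t + 1/t)/2 * G t y + besselI 1 y / 2 - besselI 0 y / (2*t) := by
    rw [hval]; field_simp; ring
  rw [hfinal] at key
  exact key

end gen
end BesselAux

/-- Closed form in terms of the half-space generating function for
`∫₀ˣ I₁(s) exp(−s(t+1/t)/2) ds` when `0 < t < 1`. -/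
theorem integral_besselI_one_exp (t x : ℝ) (ht0 : 0 < t) (ht1 : t < 1) (hx : 0 ≤ x) :
    (∫ s in (0:ℝ)..x, besselI 1 s * Real.exp (-s * (t + 1 / t) / 2)) =
      (2 * (1 + t ^ 2) / (1 - t ^ 2)) *
        (1 - Real.exp (-x * (t + 1 / t) / 2) * ∑' n : ℕ, t ^ n * besselI n x) +
      (2 / (1 - t ^ 2)) *
        (Real.exp (-x * (t + 1 / t) / 2) * besselI 0 x - 1) := by
  have ht0' : t ≠ 0 := ne_of_gt ht0
  have ht2 : (1 : ℝ) - t ^ 2 ≠ 0 := by nlinarith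
  set Φ : ℝ → ℝ := fun y =>
    -(2 * (1 + t ^ 2) / (1 - t ^ 2)) *
        (Real.exp (-y * (t + 1 / t) / 2) * BesselAux.G t y)
      + (2 / (1 - t ^ 2)) * (Real.exp (-y * (t + 1 / t) / 2) * besselI 0 y) with hPhi
  have hderiv : ∀ y ∈ Set.uIcc (0:ℝ) x,
      HasDerivAt Φ (besselI 1 y * Real.exp (-y * (t + 1 / t) / 2)) y := by
    intro y _
    have h0 : HasDerivAt (fun z : ℝ => -z * (t + 1 / t) / 2) (-(t + 1 / t) / 2) y := by
      have heq : (fun z : ℝ => -z * (t + 1 / t) / 2) =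
          fun z : ℝ => (-(t + 1 / t) / 2) * z := by funext z; ring
      rw [heq]
      simpa using (hasDerivAt_id y).const_mul (-(t + 1 / t) / 2)
    have hE := h0.exp
    have hG := BesselAux.G_hasDerivAt ht0 ht1.le y
    have hI0 := BesselAux.hasDerivAt_besselI_zero y
    have h1 := hE.mul hG
    have h2 := hE.mul hI0
    have hsum := (h1.const_mul (-(2 * (1 + t ^ 2) / (1 - t ^ 2)))).add
      (h2.const_mul (2 / (1 - t ^ 2)))
    refine hsum.congr_deriv ?_
    field_simp
    ring
  have hcont : Continuous (fun s : ℝ => besselI 1 s * Real.exp (-s * (t + 1 / t) / 2)) := by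
    apply (BesselAux.continuous_besselI 1).mul
    exact Real.continuous_exp.comp (by continuity)
  have hFTC := intervalIntegral.integral_eq_sub_of_hasDerivAt hderiv (hcont.intervalIntegrable 0 x)
  rw [hFTC]
  have hGx : (∑' n : ℕ, t ^ n * besselI n x) = BesselAux.G t x :=
    (BesselAux.hasSum_G ht0.le ht1.le x).tsum_eq
  rw [hGx]
  have hΦ0 : Φ 0 = -(2 * (1 + t ^ 2) / (1 - t ^ 2)) + 2 / (1 - t ^ 2) := by
    rw [hPhi]
    norm_num [BesselAux.G_zero, BesselAux.besselI_zero_zero]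
  rw [hΦ0, hPhi]
  ring
end

section
/- For all real x and t, Σ_{n=0}^∞ (−1)^n t^n L_n(x)/n! = exp(−t) · Σ_{k=0}^∞ (xt)^k/(k!)², where both series converge absolutely; equivalently, for x, t ≥ 0 the right-hand side equals exp(−t)·I_0(2√(xt)). -/
open MeasureTheory Real Finset

/-- Laguerre polynomial of degree `n`. -/
noncomputable def laguerre (n : ℕ) (x : ℝ) : ℝ :=
  ∑ k ∈ Finset.range (n + 1),
    (-1 : ℝ) ^ k * Nat.factorial n * x ^ k /
      ((Nat.factorial k) ^ 2 * Nat.factorial (n - k))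

/-! The generating function is the Cauchy product of the exponential series of `exp (-t)` with
`∑ (x t)ᵏ / (k!)²`: the `n`-th coefficient of that product is
`∑_{k ≤ n} (x t)ᵏ/(k!)² · (-t)ⁿ⁻ᵏ/(n-k)! = (-1)ⁿ tⁿ Lₙ(x)/n!`. Both factors converge absolutely,
so the product of their sums is the sum of the Cauchy product. -/

lemma summable_norm_pow_div_factorial (y : ℝ) :
    Summable (fun m : ℕ => ‖y ^ m / (Nat.factorial m : ℝ)‖) :=
  (Real.summable_pow_div_factorial ‖y‖).congr fun m => by
    rw [norm_div, norm_pow, RCLike.norm_natCast]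

lemma summable_norm_pow_div_factorial_sq (y : ℝ) :
    Summable (fun k : ℕ => ‖y ^ k / (Nat.factorial k : ℝ) ^ 2‖) := by
  refine (summable_norm_pow_div_factorial y).of_nonneg_of_le (fun k => norm_nonneg _)
    fun k => ?_
  have hk : (1 : ℝ) ≤ Nat.factorial k := mod_cast k.factorial_pos
  rw [norm_div, norm_div, norm_pow, norm_pow, RCLike.norm_natCast]
  gcongr
  nlinarith

lemma besselI_zero_two_mul_sqrt {y : ℝ} (hy : 0 ≤ y) :
    besselI 0 (2 * √y) = ∑' k : ℕ, y ^ k / (Nat.factorial k : ℝ) ^ 2 := by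
  refine tsum_congr fun k => ?_
  rw [mul_div_cancel_left₀ _ two_ne_zero, zero_add, zero_add, pow_mul, sq_sqrt hy, sq]

lemma neg_one_pow_mul_pow_mul_laguerre_div_factorial (x t : ℝ) (n : ℕ) :
    (-1 : ℝ) ^ n * t ^ n * laguerre n x / Nat.factorial n =
      ∑ k ∈ range (n + 1),
        (x * t) ^ k / (Nat.factorial k : ℝ) ^ 2 * ((-t) ^ (n - k) / Nat.factorial (n - k)) := by
  rw [laguerre, mul_sum, sum_div]
  refine sum_congr rfl fun k hk => ?_
  obtain ⟨m, rfl⟩ : ∃ m, n = k + m := ⟨n - k, by grind⟩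
  have hsign : (-1 : ℝ) ^ (k + m) * (-1) ^ k = (-1) ^ m := by
    rw [← pow_add, show k + m + k = m + 2 * k by ring, pow_add, pow_mul, neg_one_sq, one_pow,
      mul_one]
  rw [Nat.add_sub_cancel_left, neg_pow t, ← hsign]
  field_simp
  ring

/-- `Σ_{n≥0} (−1)ⁿ tⁿ Lₙ(x)/n! = exp(−t) Σ_{k≥0} (xt)ᵏ/(k!)²`, both series converging
absolutely; for `x, t ≥ 0` the right-hand side equals `exp(−t) I₀(2√(xt))`. -/
theorem laguerre_genfun_eq_besselI (x t : ℝ) :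
    Summable (fun n : ℕ => |(-1 : ℝ) ^ n * t ^ n * laguerre n x / Nat.factorial n|) ∧
    Summable (fun k : ℕ => |(x * t) ^ k / ((Nat.factorial k : ℝ)) ^ 2|) ∧
    (∑' n : ℕ, (-1 : ℝ) ^ n * t ^ n * laguerre n x / Nat.factorial n) =
      Real.exp (-t) * ∑' k : ℕ, (x * t) ^ k / ((Nat.factorial k : ℝ)) ^ 2 ∧
    (0 ≤ x → 0 ≤ t →
      Real.exp (-t) * (∑' k : ℕ, (x * t) ^ k / ((Nat.factorial k : ℝ)) ^ 2) =
        Real.exp (-t) * besselI 0 (2 * Real.sqrt (x * t))) := by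
  have hbessel := summable_norm_pow_div_factorial_sq (x * t)
  have hexp := summable_norm_pow_div_factorial (-t)
  refine ⟨?_, hbessel, ?_, fun hx ht => ?_⟩
  · simpa only [neg_one_pow_mul_pow_mul_laguerre_div_factorial, Real.norm_eq_abs] using
      summable_norm_sum_mul_range_of_summable_norm hbessel hexp
  · rw [Real.exp_eq_exp_ℝ, NormedSpace.exp_eq_tsum_div, mul_comm,
      tsum_mul_tsum_eq_tsum_sum_range_of_summable_norm hbessel hexp]
    simp only [neg_one_pow_mul_pow_mul_laguerre_div_factorial]
  · rw [besselI_zero_two_mul_sqrt (mul_nonneg hx ht)]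
end

section
/- For every integer m ≥ 1, every real x > 0 and every real t > 0, Σ_{n=0}^∞ (−1)^n t^n L_n(x)/(n + m)! = (exp(−t)/t^m) · Σ_{n=m}^∞ ((n−1)!/((m−1)!(n−m)!)) · (t/x)^{n/2} · I_n(2√(xt)), where both series converge. -/
open MeasureTheory Real

/-! Expanding `Lₙ(x)` and `Iₙ`, both sides become absolutely convergent double series whose
`k`-th rows carry the common factor `(xt)ᵏ / (k! (k + m)!)`. Up to that factor, the `k`-th row on
the left is `₁F₁(k + 1; k + m + 1; -t)` and the one on the right is `e⁻ᵗ ₁F₁(m; k + m + 1; t)`, so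
the rows agree by Kummer's transformation. That in turn follows from the Cauchy product with `eᵗ`,
since the resulting binomial sums are forward differences of a Beta integral. -/

open Finset Nat

lemma abs_neg_one_pow_mul_factorial_div_factorial_le_one {a b : ℕ} (h : a ≤ b) (j : ℕ) :
    |(-1) ^ j * (a ! / b ! : ℝ)| ≤ 1 := by
  rw [abs_mul, abs_pow, abs_neg, abs_one, one_pow, one_mul, abs_div, Nat.abs_cast, Nat.abs_cast,
    div_le_one (by positivity)]
  exact_mod_cast factorial_le h

lemma factorial_mul_factorial_div_le_one (s N k : ℕ) :
    (N + s)! * k ! / (s ! * (N + s + 1 + k)! : ℝ) ≤ 1 := by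
  rw [div_le_one (by positivity)]
  have hdvd := factorial_mul_factorial_dvd_factorial_add (N + s) k
  calc ((N + s)! * k ! : ℝ) ≤ (N + s + k)! := by exact_mod_cast le_of_dvd (factorial_pos _) hdvd
    _ ≤ 1 * (N + s + 1 + k)! := by rw [one_mul]; exact_mod_cast factorial_le (by omega)
    _ ≤ s ! * (N + s + 1 + k)! := by gcongr; exact_mod_cast s.factorial_pos

lemma factorial_mul_factorial_div_sub_succ (s N k : ℕ) :
    ((N + s)! * k ! / (s ! * (N + s + 1 + k)!) : ℝ) -
        (N + s)! * (k + 1)! / (s ! * (N + s + 1 + (k + 1))!) =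
      (N + 1 + s)! * k ! / (s ! * (N + 1 + s + 1 + k)!) := by
  rw [show N + 1 + s = N + s + 1 by ring, show N + s + 1 + (k + 1) = N + s + 1 + k + 1 by ring,
    show N + s + 1 + 1 + k = N + s + 1 + k + 1 by ring, factorial_succ (N + s), factorial_succ k,
    factorial_succ (N + s + 1 + k)]
  push_cast
  field_simp
  ring

/-- `k! / (k + s + 1)! = (1 / s!) ∫₀¹ uᵏ (1 - u)ˢ du`, and taking `N` forward differences in `k`
turns the integrand into `(-1)ᴺ uᵏ (1 - u)^(N + s)`. -/
lemma fwdDiff_iter_factorial_div_factorial (s N : ℕ) :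
    (fwdDiff 1)^[N] (fun k : ℕ => (k ! / (k + s + 1)! : ℝ)) =
      fun k => (-1 : ℝ) ^ N * ((N + s)! * k ! / (s ! * (N + s + 1 + k)!)) := by
  induction N with
  | zero =>
    ext k
    rw [Function.iterate_zero_apply, zero_add, show s + 1 + k = k + s + 1 by ring]
    field_simp
  | succ N ih =>
    ext k
    rw [Function.iterate_succ_apply', ih, fwdDiff, ← factorial_mul_factorial_div_sub_succ]
    ring

lemma sum_choose_mul_neg_one_pow_mul_factorial_div_factorial (s k N : ℕ) :
    ∑ j ∈ range (N + 1), (N.choose j : ℝ) * ((-1) ^ j * ((k + j)! / (k + j + s + 1)!)) =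
      (N + s)! * k ! / (s ! * (N + s + 1 + k)!) := by
  have h := congr_fun (fwdDiff_iter_factorial_div_factorial s N) k
  rw [fwdDiff_iter_eq_sum_shift] at h
  have hsign : ∀ j ≤ N, ((-1 : ℝ) ^ N * (-1) ^ (N - j)) = (-1) ^ j := by
    intro j hj
    obtain ⟨i, rfl⟩ := Nat.exists_eq_add_of_le hj
    rw [Nat.add_sub_cancel_left, pow_add, mul_assoc, ← pow_add, Even.neg_one_pow ⟨i, rfl⟩, mul_one]
  calc ∑ j ∈ range (N + 1), (N.choose j : ℝ) * ((-1) ^ j * ((k + j)! / (k + j + s + 1)!))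
      = (-1) ^ N * ∑ j ∈ range (N + 1),
          ((-1 : ℤ) ^ (N - j) * N.choose j) • ((k + j • 1)! / (k + j • 1 + s + 1)! : ℝ) := by
        rw [mul_sum]
        refine sum_congr rfl fun j hj => ?_
        rw [← hsign j (Nat.lt_succ_iff.mp (mem_range.mp hj)), zsmul_eq_mul, smul_eq_mul, mul_one]
        push_cast
        ring
    _ = _ := by
        rw [h, ← mul_assoc, ← pow_add, Even.neg_one_pow ⟨N, rfl⟩, one_mul]

lemma summable_norm_mul_pow_div_factorial {b : ℕ → ℝ} {C : ℝ} (hb : ∀ j, |b j| ≤ C) (t : ℝ) :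
    Summable fun j => ‖b j * (t ^ j / j !)‖ := by
  refine .of_nonneg_of_le (fun _ => norm_nonneg _) (fun j => ?_)
    ((Real.summable_pow_div_factorial |t|).mul_left C)
  rw [Real.norm_eq_abs, abs_mul, abs_div, abs_pow, Nat.abs_cast]
  exact mul_le_mul_of_nonneg_right (hb j) (by positivity)

theorem Real.exp_mul_tsum_mul_pow_div_factorial {b : ℕ → ℝ} {C : ℝ} (hb : ∀ j, |b j| ≤ C)
    (t : ℝ) :
    exp t * ∑' j, b j * (t ^ j / j !) =
      ∑' n, (∑ j ∈ range (n + 1), n.choose j * b j) * (t ^ n / n !) := by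
  have hexp : Summable fun i => ‖t ^ i / (i ! : ℝ)‖ := by
    simpa using summable_norm_mul_pow_div_factorial (b := fun _ => 1) (fun _ => le_rfl) t
  rw [exp_eq_exp_ℝ, NormedSpace.exp_eq_tsum_div, mul_comm,
    tsum_mul_tsum_eq_tsum_sum_range_of_summable_norm
      (summable_norm_mul_pow_div_factorial hb t) hexp]
  refine tsum_congr fun n => ?_
  rw [sum_mul]
  refine sum_congr rfl fun j hj => ?_
  have hjn : j ≤ n := Nat.lt_succ_iff.mp (mem_range.mp hj)
  rw [cast_choose ℝ hjn, ← Nat.add_sub_cancel' hjn, pow_add, Nat.add_sub_cancel_left]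
  field_simp

/-- Kummer's transformation `₁F₁(k + 1; k + s + 2; -t) = e⁻ᵗ ₁F₁(s + 1; k + s + 2; t)`,
multiplied by `k! / (k + s + 1)!`. -/
theorem tsum_neg_one_pow_mul_factorial_div_factorial (s k : ℕ) (t : ℝ) :
    ∑' j, (-1) ^ j * ((k + j)! / (k + j + s + 1)! : ℝ) * (t ^ j / j !) =
      exp (-t) * ∑' N, (N + s)! * k ! / (s ! * (N + s + 1 + k)! : ℝ) * (t ^ N / N !) := by
  rw [exp_neg, eq_inv_mul_iff_mul_eq₀ (exp_ne_zero t),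
    Real.exp_mul_tsum_mul_pow_div_factorial
      (fun j => abs_neg_one_pow_mul_factorial_div_factorial_le_one (by omega : k + j ≤ _) j)]
  simp_rw [sum_choose_mul_neg_one_pow_mul_factorial_div_factorial]

lemma summable_pow_div_factorial_sq_mul {c : ℕ × ℕ → ℝ} (hc : ∀ p, |c p| ≤ 1) (y z : ℝ) :
    Summable fun p : ℕ × ℕ => y ^ p.1 / (p.1 ! : ℝ) ^ 2 * c p * (z ^ p.2 / p.2 !) := by
  refine .of_norm_bounded ((summable_pow_div_factorial |y|).mul_of_nonneg
    (summable_pow_div_factorial |z|) (fun _ => by positivity) (fun _ => by positivity)) fun p => ?_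
  have hk : (1 : ℝ) ≤ p.1 ! := by exact_mod_cast p.1.factorial_pos
  rw [Real.norm_eq_abs, abs_mul, abs_mul, abs_div, abs_div, abs_pow, abs_pow, abs_pow,
    Nat.abs_cast, Nat.abs_cast]
  calc |y| ^ p.1 / (p.1 ! : ℝ) ^ 2 * |c p| * (|z| ^ p.2 / p.2 !)
      ≤ |y| ^ p.1 / p.1 ! * 1 * (|z| ^ p.2 / p.2 !) := by
        gcongr
        · nlinarith
        · exact hc p
    _ = _ := by rw [mul_one]

theorem Summable.hasSum_sum_antidiagonal {α : Type*} [AddCommMonoid α] [TopologicalSpace α]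
    [ContinuousAdd α] [RegularSpace α] {f : ℕ × ℕ → α} (hf : Summable f) :
    HasSum (fun n => ∑ p ∈ antidiagonal n, f p) (∑' p, f p) := by
  refine ((HasAntidiagonal.sigmaAntidiagonalEquivProd.hasSum_iff (f := f)).2 hf.hasSum).sigma
    fun n => ?_
  rw [← Finset.sum_finset_coe]
  exact hasSum_fintype _

lemma rpow_mul_besselI_two_mul_sqrt (n : ℕ) {x t : ℝ} (hx : 0 < x) (ht : 0 < t) :
    (t / x) ^ ((n : ℝ) / 2) * besselI n (2 * √(x * t)) =
      ∑' k, t ^ n * (x * t) ^ k / (k ! * (n + k)! : ℝ) := by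
  have hsqrt : √(t / x) * √(x * t) = t := by
    rw [← sqrt_mul (by positivity), show t / x * (x * t) = t ^ 2 by field_simp, sqrt_sq ht.le]
  rw [show (n : ℝ) / 2 = 1 / 2 * n by ring, rpow_mul (by positivity), rpow_natCast,
    ← sqrt_eq_rpow, besselI, ← tsum_mul_left]
  refine tsum_congr fun k => ?_
  have hpow : √(t / x) ^ n * √(x * t) ^ (n + 2 * k) = t ^ n * (x * t) ^ k := by
    rw [pow_add, pow_mul, sq_sqrt (by positivity), ← mul_assoc, ← mul_pow, hsqrt]
  rw [mul_div_cancel_left₀ _ two_ne_zero, ← hpow]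
  ring

section Kernels

-- `s` stands for `m - 1`, which keeps truncated subtraction out of the kernels.
variable (s : ℕ) (x t : ℝ)

noncomputable def laguerreKernel (p : ℕ × ℕ) : ℝ :=
  (x * t) ^ p.1 / (p.1 ! : ℝ) ^ 2 * ((-1) ^ p.2 * ((p.1 + p.2)! / (p.1 + p.2 + s + 1)!)) *
    (t ^ p.2 / p.2 !)

noncomputable def besselKernel (p : ℕ × ℕ) : ℝ :=
  (x * t) ^ p.1 / (p.1 ! : ℝ) ^ 2 * ((p.2 + s)! * p.1 ! / (s ! * (p.2 + s + 1 + p.1)!)) *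
    (t ^ p.2 / p.2 !)

lemma summable_laguerreKernel : Summable (laguerreKernel s x t) :=
  summable_pow_div_factorial_sq_mul
    (fun p => abs_neg_one_pow_mul_factorial_div_factorial_le_one (by omega) _) _ _

lemma summable_besselKernel : Summable (besselKernel s x t) :=
  summable_pow_div_factorial_sq_mul (fun p => by
    rw [abs_of_nonneg (by positivity)]; exact factorial_mul_factorial_div_le_one _ _ _) _ _

lemma tsum_laguerreKernel_fst (k : ℕ) :
    ∑' j, laguerreKernel s x t (k, j) = exp (-t) * ∑' N, besselKernel s x t (k, N) := by
  simp only [laguerreKernel, besselKernel]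
  simp_rw [mul_assoc ((x * t) ^ k / (k ! : ℝ) ^ 2), tsum_mul_left,
    tsum_neg_one_pow_mul_factorial_div_factorial]
  ring

lemma laguerre_term_eq_sum_antidiagonal (n : ℕ) :
    (-1) ^ n * t ^ n * laguerre n x / (n + (s + 1))! =
      ∑ p ∈ antidiagonal n, laguerreKernel s x t p := by
  rw [Nat.sum_antidiagonal_eq_sum_range_succ_mk, laguerre, mul_sum, sum_div]
  refine sum_congr rfl fun k hk => ?_
  obtain ⟨j, rfl⟩ := Nat.exists_eq_add_of_le (Nat.lt_succ_iff.mp (mem_range.mp hk))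
  simp only [laguerreKernel, Nat.add_sub_cancel_left]
  have hsign : ((-1 : ℝ) ^ k) ^ 2 = 1 := by rw [← pow_mul, Even.neg_one_pow ⟨k, by ring⟩]
  rw [← add_assoc]
  linear_combination ((-1) ^ j * t ^ (k + j) * (k + j)! * x ^ k /
    ((k ! : ℝ) ^ 2 * j ! * (k + j + s + 1)!)) * hsign

lemma besselI_series_term_eq (hx : 0 < x) (ht : 0 < t) (j : ℕ) :
    ((j + (s + 1) - 1)! : ℝ) / ((s + 1 - 1)! * j !) * (t / x) ^ (((j : ℝ) + (s + 1 : ℕ)) / 2) *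
        besselI (j + (s + 1)) (2 * √(x * t)) =
      t ^ (s + 1) * ∑' k, besselKernel s x t (k, j) := by
  rw [Nat.add_succ_sub_one, Nat.add_sub_cancel, ← Nat.cast_add, mul_assoc,
    rpow_mul_besselI_two_mul_sqrt _ hx ht, ← tsum_mul_left, ← tsum_mul_left]
  refine tsum_congr fun k => ?_
  simp only [besselKernel]
  rw [show j + (s + 1) + k = j + s + 1 + k by ring]
  field_simp
  ring

end Kernels

/-- For `m ≥ 1`, `x > 0`, `t > 0`:
`Σ_{n≥0} (−1)ⁿ tⁿ Lₙ(x)/(n+m)!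
  = (e^(−t)/tᵐ) Σ_{n≥m} ((n−1)!/((m−1)!(n−m)!)) (t/x)^(n/2) Iₙ(2√(xt))`,
both series converging (the right-hand sum over `n ≥ m` is reindexed by `n = j + m`). -/
theorem laguerre_series_eq_besselI_series (m : ℕ) (x t : ℝ)
    (hm : 1 ≤ m) (hx : 0 < x) (ht : 0 < t) :
    Summable (fun n : ℕ => (-1 : ℝ) ^ n * t ^ n * laguerre n x / Nat.factorial (n + m)) ∧
    Summable (fun j : ℕ =>
      ((Nat.factorial (j + m - 1) : ℝ) / (Nat.factorial (m - 1) * Nat.factorial j)) *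
        (t / x) ^ (((j : ℝ) + m) / 2) * besselI (j + m) (2 * Real.sqrt (x * t))) ∧
    (∑' n : ℕ, (-1 : ℝ) ^ n * t ^ n * laguerre n x / Nat.factorial (n + m)) =
      (Real.exp (-t) / t ^ m) *
        ∑' j : ℕ,
          ((Nat.factorial (j + m - 1) : ℝ) / (Nat.factorial (m - 1) * Nat.factorial j)) *
            (t / x) ^ (((j : ℝ) + m) / 2) * besselI (j + m) (2 * Real.sqrt (x * t)) := by
  obtain ⟨s, rfl⟩ := Nat.exists_eq_add_of_le' hm
  have hL := summable_laguerreKernel s x t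
  have hB := summable_besselKernel s x t
  have hlhs : HasSum (fun n : ℕ => (-1 : ℝ) ^ n * t ^ n * laguerre n x / (n + (s + 1))!)
      (exp (-t) * ∑' p, besselKernel s x t p) := by
    simp_rw [laguerre_term_eq_sum_antidiagonal]
    rw [hB.tsum_prod, ← tsum_mul_left, ← tsum_congr (tsum_laguerreKernel_fst s x t),
      ← hL.tsum_prod]
    exact hL.hasSum_sum_antidiagonal
  have hrhs : HasSum (fun j : ℕ => ((j + (s + 1) - 1)! : ℝ) / ((s + 1 - 1)! * j !) *
        (t / x) ^ (((j : ℝ) + (s + 1 : ℕ)) / 2) * besselI (j + (s + 1)) (2 * √(x * t)))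
      (t ^ (s + 1) * ∑' p, besselKernel s x t p) := by
    simp_rw [besselI_series_term_eq s x t hx ht]
    refine HasSum.mul_left _ ?_
    rw [hB.tsum_prod, ← hB.tsum_comm (f := fun k j => besselKernel s x t (k, j))]
    exact hB.prod_symm.prod.hasSum
  refine ⟨hlhs.summable, hrhs.summable, ?_⟩
  rw [hlhs.tsum_eq, hrhs.tsum_eq]
  field_simp
end
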